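/- For |z| ≤ 1 with z ≠ 0 (and also z = 0 by continuity/invertibility of leading and constant coefficients), the polynomials φ_n^{R}(z)† and φ_n^{L,*}(z) have no common nontrivial kernel; in particular φ_n^{L,*}(z) is invertible for all |z| ≤ 1 and φ_n^R(z) is invertible for |z| = 1. -/

import Mathlib

noncomputable section

open ContinuousLinearMap

variable {H : Type*} [NormedAddCommGroup H] [InnerProductSpace ℂ H] [CompleteSpace H]

/-- A nontrivial positive operator-valued measure `μ` on the unit circle `𝕋`, recorded through
its moments `mom j = (1/2π) ∫ e^{-ijθ} dμ(θ)` (so `mom (-j) = (mom j)†`) and the associated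
right and left inner products `⟨⟨f, g⟩⟩_R = ∫ f(z)† dμ(z) g(z)` and
`⟨⟨f, g⟩⟩_L = ∫ g(z) dμ(z) f(z)†` on operator-valued functions on the circle, together with
their characteristic algebraic properties, positivity, and nontriviality
(`Trace ⟨⟨f, f⟩⟩_R > 0`, i.e. `⟨⟨f, f⟩⟩_R ≠ 0`, for every nonzero operator polynomial `f`). -/
structure OpMeasure (H : Type*) [NormedAddCommGroup H] [InnerProductSpace ℂ H]
    [CompleteSpace H] where
  mom : ℤ → H →L[ℂ] H
  Rip : (ℂ → H →L[ℂ] H) → (ℂ → H →L[ℂ] H) → (H →L[ℂ] H)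
  Lip : (ℂ → H →L[ℂ] H) → (ℂ → H →L[ℂ] H) → (H →L[ℂ] H)
  mom_neg : ∀ j : ℤ, mom (-j) = adjoint (mom j)
  Rip_mono : ∀ m k : ℕ,
    Rip (fun z => z ^ m • (1 : H →L[ℂ] H)) (fun z => z ^ k • (1 : H →L[ℂ] H)) =
      mom ((m : ℤ) - (k : ℤ))
  Lip_mono : ∀ m k : ℕ,
    Lip (fun z => z ^ m • (1 : H →L[ℂ] H)) (fun z => z ^ k • (1 : H →L[ℂ] H)) =
      mom ((m : ℤ) - (k : ℤ))
  Rip_add_left : ∀ f g h, Rip (f + g) h = Rip f h + Rip g h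
  Rip_add_right : ∀ f g h, Rip f (g + h) = Rip f g + Rip f h
  Lip_add_left : ∀ f g h, Lip (f + g) h = Lip f h + Lip g h
  Lip_add_right : ∀ f g h, Lip f (g + h) = Lip f g + Lip f h
  Rip_smul_left : ∀ (c : ℂ) (f g), Rip (fun z => c • f z) g = (starRingEnd ℂ) c • Rip f g
  Rip_smul_right : ∀ (c : ℂ) (f g), Rip f (fun z => c • g z) = c • Rip f g
  Lip_smul_left : ∀ (c : ℂ) (f g), Lip (fun z => c • f z) g = (starRingEnd ℂ) c • Lip f g
  Lip_smul_right : ∀ (c : ℂ) (f g), Lip f (fun z => c • g z) = c • Lip f g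
  Rip_op_left : ∀ (a : H →L[ℂ] H) (f g), Rip (fun z => f z * a) g = adjoint a * Rip f g
  Rip_op_right : ∀ (a : H →L[ℂ] H) (f g), Rip f (fun z => g z * a) = Rip f g * a
  Lip_op_left : ∀ (a : H →L[ℂ] H) (f g), Lip (fun z => a * f z) g = Lip f g * adjoint a
  Lip_op_right : ∀ (a : H →L[ℂ] H) (f g), Lip f (fun z => a * g z) = a * Lip f g
  Rip_adjoint : ∀ f g, adjoint (Rip f g) = Rip g f
  Lip_adjoint : ∀ f g, adjoint (Lip f g) = Lip g f
  Rip_pos : ∀ f, (Rip f f).IsPositive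
  Lip_pos : ∀ f, (Lip f f).IsPositive
  nontrivial_R : ∀ (n : ℕ) (f : ℂ → H →L[ℂ] H),
    (∃ a : Fin (n + 1) → H →L[ℂ] H, ∀ z, f z = ∑ k : Fin (n + 1), z ^ (k : ℕ) • a k) →
    f ≠ 0 → ∃ h : H, 0 < (@inner ℂ H _ (Rip f f h) h).re

/-- The right block Toeplitz matrix `T_n^R = [μ_{i-j}]_{i,j=0}^{n-1}` of the moments. -/
def TmatR (mom : ℤ → H →L[ℂ] H) (n : ℕ) : Matrix (Fin n) (Fin n) (H →L[ℂ] H) :=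
  fun i j => mom ((i : ℤ) - (j : ℤ))

/-- The left block Toeplitz matrix `T_n^L = [μ_{j-i}]_{i,j=0}^{n-1}` of the moments. -/
def TmatL (mom : ℤ → H →L[ℂ] H) (n : ℕ) : Matrix (Fin n) (Fin n) (H →L[ℂ] H) :=
  fun i j => mom ((j : ℤ) - (i : ℤ))

/-- The column `ν_n = (μ_{-n}, μ_{-n+1}, …, μ_{-1})ᵀ`. -/
def nuR (mom : ℤ → H →L[ℂ] H) (n : ℕ) : Fin n → H →L[ℂ] H :=
  fun k => mom ((k : ℤ) - (n : ℤ))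

/-- The column `ξ_n = (μ_n, μ_{n-1}, …, μ_1)ᵀ`. -/
def xiL (mom : ℤ → H →L[ℂ] H) (n : ℕ) : Fin n → H →L[ℂ] H :=
  fun k => mom ((n : ℤ) - (k : ℤ))

/-- Coefficients `(T_n^R)⁻¹ ν_n` of the monic right orthogonal polynomial. -/
def phiRcoef (mom : ℤ → H →L[ℂ] H) (n : ℕ) : Fin n → H →L[ℂ] H :=
  (Ring.inverse (TmatR mom n)).mulVec (nuR mom n)

/-- The monic right orthogonal polynomial
`Φ_n^R(z) = zⁿ I - [I, zI, …, z^{n-1}I] (T_n^R)⁻¹ ν_n`. -/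
def phiR (mom : ℤ → H →L[ℂ] H) (n : ℕ) : ℂ → H →L[ℂ] H :=
  fun z => z ^ n • (1 : H →L[ℂ] H) - ∑ k : Fin n, z ^ (k : ℕ) • phiRcoef mom n k

/-- Coefficients `[μ_{-n}, …, μ_{-1}] (T_n^L)⁻¹` of the monic left orthogonal polynomial. -/
def phiLcoef (mom : ℤ → H →L[ℂ] H) (n : ℕ) : Fin n → H →L[ℂ] H :=
  Matrix.vecMul (nuR mom n) (Ring.inverse (TmatL mom n))

/-- The monic left orthogonal polynomial
`Φ_n^L(z) = zⁿ I - [μ_{-n}, …, μ_{-1}] (T_n^L)⁻¹ (I, zI, …, z^{n-1}I)ᵀ`. -/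
def phiL (mom : ℤ → H →L[ℂ] H) (n : ℕ) : ℂ → H →L[ℂ] H :=
  fun z => z ^ n • (1 : H →L[ℂ] H) - ∑ k : Fin n, z ^ (k : ℕ) • phiLcoef mom n k

/-- The degree-`n` reversed polynomial `Φ_n^{R,*}(z) = zⁿ Φ_n^R(1/z̄)†`. -/
def phiRstar (mom : ℤ → H →L[ℂ] H) (n : ℕ) : ℂ → H →L[ℂ] H :=
  fun z => (1 : H →L[ℂ] H) - ∑ k : Fin n, z ^ (n - (k : ℕ)) • adjoint (phiRcoef mom n k)

/-- The degree-`n` reversed polynomial `Φ_n^{L,*}(z) = zⁿ Φ_n^L(1/z̄)†`. -/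
def phiLstar (mom : ℤ → H →L[ℂ] H) (n : ℕ) : ℂ → H →L[ℂ] H :=
  fun z => (1 : H →L[ℂ] H) - ∑ k : Fin n, z ^ (n - (k : ℕ)) • adjoint (phiLcoef mom n k)

/-- The Schur complement `κ_n^R = μ₀ - ν_n* (T_n^R)⁻¹ ν_n` of `μ₀` in `T_{n+1}^R`. -/
def kappaR (mom : ℤ → H →L[ℂ] H) (n : ℕ) : H →L[ℂ] H :=
  mom 0 - ∑ k : Fin n, adjoint (nuR mom n k) * phiRcoef mom n k

/-- The Schur complement `κ_n^L = μ₀ - ξ_n* (T_n^L)⁻¹ ξ_n` of `μ₀` in `T_{n+1}^L`. -/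
def kappaL (mom : ℤ → H →L[ℂ] H) (n : ℕ) : H →L[ℂ] H :=
  mom 0 - ∑ k : Fin n, adjoint (xiL mom n k) * ((Ring.inverse (TmatL mom n)).mulVec (xiL mom n) k)

/-- `IsSqrtSeq s κ` : for every `m`, `s m` is the (invertible) positive square root of `κ m`. -/
def IsSqrtSeq (s : ℕ → H →L[ℂ] H) (κ : ℕ → H →L[ℂ] H) : Prop :=
  ∀ m : ℕ, (s m).IsPositive ∧ s m * s m = κ m ∧ IsUnit (s m)

/-- The Verblunsky coefficient `α_n = α_n^R = -(κ_n^{-R/2})† Φ_{n+1}^R(0)† κ_n^{L/2}`,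
expressed through given positive square roots `sR m = κ_m^{R/2}`, `sL m = κ_m^{L/2}`. -/
def alphaV (mom : ℤ → H →L[ℂ] H) (sR sL : ℕ → H →L[ℂ] H) (j : ℕ) : H →L[ℂ] H :=
  -(adjoint (Ring.inverse (sR j)) * adjoint (phiR mom (j + 1) 0) * sL j)

/-- The operator on the Hilbert space `H ⊕ ⋯ ⊕ H` (`PiLp 2`) associated with a block
operator matrix. -/
def blockToOp {n : ℕ} (M : Matrix (Fin n) (Fin n) (H →L[ℂ] H)) :
    (PiLp 2 fun _ : Fin n => H) →L[ℂ] PiLp 2 fun _ : Fin n => H :=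
  ((PiLp.continuousLinearEquiv 2 ℂ fun _ : Fin n => H).symm.toContinuousLinearMap).comp
    ((ContinuousLinearMap.pi fun i =>
        ∑ j : Fin n, (M i j).comp (ContinuousLinearMap.proj j)).comp
      (PiLp.continuousLinearEquiv 2 ℂ fun _ : Fin n => H).toContinuousLinearMap)

/-- An operator `T` on a Hilbert space is *positive definite* if `⟨T x, x⟩ > 0` for every
`x ≠ 0` and `T` has a bounded inverse. -/
def IsPosDef {E : Type*} [NormedAddCommGroup E] [InnerProductSpace ℂ E]
    (T : E →L[ℂ] E) : Prop :=
  (∀ x : E, x ≠ 0 → 0 < (@inner ℂ E _ (T x) x).re) ∧ IsUnit T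
section Part1

variable {H : Type*} [NormedAddCommGroup H] [InnerProductSpace ℂ H] [CompleteSpace H]
variable (μ : OpMeasure H)

lemma Rip_zero_left (g : ℂ → H →L[ℂ] H) : μ.Rip (fun _ => 0) g = 0 := by
  have h := μ.Rip_smul_left 0 (fun _ => 0) g
  simpa using h

lemma Rip_zero_right (f : ℂ → H →L[ℂ] H) : μ.Rip f (fun _ => 0) = 0 := by
  have h := μ.Rip_smul_right 0 f (fun _ => 0)
  simpa using h

lemma Lip_zero_left (g : ℂ → H →L[ℂ] H) : μ.Lip (fun _ => 0) g = 0 := by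
  have h := μ.Lip_smul_left 0 (fun _ => 0) g
  simpa using h

lemma Lip_zero_right (f : ℂ → H →L[ℂ] H) : μ.Lip f (fun _ => 0) = 0 := by
  have h := μ.Lip_smul_right 0 f (fun _ => 0)
  simpa using h

lemma Rip_add_left' (f g h : ℂ → H →L[ℂ] H) :
    μ.Rip (fun z => f z + g z) h = μ.Rip f h + μ.Rip g h := μ.Rip_add_left f g h

lemma Rip_add_right' (f g h : ℂ → H →L[ℂ] H) :
    μ.Rip f (fun z => g z + h z) = μ.Rip f g + μ.Rip f h := μ.Rip_add_right f g h

lemma Lip_add_left' (f g h : ℂ → H →L[ℂ] H) :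
    μ.Lip (fun z => f z + g z) h = μ.Lip f h + μ.Lip g h := μ.Lip_add_left f g h

lemma Lip_add_right' (f g h : ℂ → H →L[ℂ] H) :
    μ.Lip f (fun z => g z + h z) = μ.Lip f g + μ.Lip f h := μ.Lip_add_right f g h

lemma Rip_sub_left (f g h : ℂ → H →L[ℂ] H) :
    μ.Rip (fun z => f z - g z) h = μ.Rip f h - μ.Rip g h := by
  have h1 : μ.Rip (fun z => (f z - g z) + g z) h
      = μ.Rip (fun z => f z - g z) h + μ.Rip g h := Rip_add_left' μ _ _ _
  have h2 : (fun z => (f z - g z) + g z) = f := by funext z; abel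
  rw [h2] at h1; rw [eq_sub_iff_add_eq]; exact h1.symm

lemma Rip_sub_right (f g h : ℂ → H →L[ℂ] H) :
    μ.Rip f (fun z => g z - h z) = μ.Rip f g - μ.Rip f h := by
  have h1 : μ.Rip f (fun z => (g z - h z) + h z)
      = μ.Rip f (fun z => g z - h z) + μ.Rip f h := Rip_add_right' μ _ _ _
  have h2 : (fun z => (g z - h z) + h z) = g := by funext z; abel
  rw [h2] at h1; rw [eq_sub_iff_add_eq]; exact h1.symm

lemma Lip_sub_left (f g h : ℂ → H →L[ℂ] H) :
    μ.Lip (fun z => f z - g z) h = μ.Lip f h - μ.Lip g h := by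
  have h1 : μ.Lip (fun z => (f z - g z) + g z) h
      = μ.Lip (fun z => f z - g z) h + μ.Lip g h := Lip_add_left' μ _ _ _
  have h2 : (fun z => (f z - g z) + g z) = f := by funext z; abel
  rw [h2] at h1; rw [eq_sub_iff_add_eq]; exact h1.symm

lemma Lip_sub_right (f g h : ℂ → H →L[ℂ] H) :
    μ.Lip f (fun z => g z - h z) = μ.Lip f g - μ.Lip f h := by
  have h1 : μ.Lip f (fun z => (g z - h z) + h z)
      = μ.Lip f (fun z => g z - h z) + μ.Lip f h := Lip_add_right' μ _ _ _
  have h2 : (fun z => (g z - h z) + h z) = g := by funext z; abel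
  rw [h2] at h1; rw [eq_sub_iff_add_eq]; exact h1.symm

lemma Rip_sum_left {ι : Type*} (s : Finset ι) (f : ι → ℂ → H →L[ℂ] H) (g : ℂ → H →L[ℂ] H) :
    μ.Rip (fun z => ∑ i ∈ s, f i z) g = ∑ i ∈ s, μ.Rip (f i) g := by
  classical
  induction s using Finset.induction with
  | empty => simpa using Rip_zero_left μ g
  | @insert a s ha ih =>
    have h2 : (fun z => ∑ i ∈ insert a s, f i z)
        = fun z => f a z + ∑ i ∈ s, f i z := by
      funext z; rw [Finset.sum_insert ha]
    rw [h2, Rip_add_left' μ _ _ _, ih, Finset.sum_insert ha]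

lemma Rip_sum_right {ι : Type*} (s : Finset ι) (f : ℂ → H →L[ℂ] H) (g : ι → ℂ → H →L[ℂ] H) :
    μ.Rip f (fun z => ∑ i ∈ s, g i z) = ∑ i ∈ s, μ.Rip f (g i) := by
  classical
  induction s using Finset.induction with
  | empty => simpa using Rip_zero_right μ f
  | @insert a s ha ih =>
    have h2 : (fun z => ∑ i ∈ insert a s, g i z)
        = fun z => g a z + ∑ i ∈ s, g i z := by
      funext z; rw [Finset.sum_insert ha]
    rw [h2, Rip_add_right' μ _ _ _, ih, Finset.sum_insert ha]

lemma Lip_sum_left {ι : Type*} (s : Finset ι) (f : ι → ℂ → H →L[ℂ] H) (g : ℂ → H →L[ℂ] H) :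
    μ.Lip (fun z => ∑ i ∈ s, f i z) g = ∑ i ∈ s, μ.Lip (f i) g := by
  classical
  induction s using Finset.induction with
  | empty => simpa using Lip_zero_left μ g
  | @insert a s ha ih =>
    have h2 : (fun z => ∑ i ∈ insert a s, f i z)
        = fun z => f a z + ∑ i ∈ s, f i z := by
      funext z; rw [Finset.sum_insert ha]
    rw [h2, Lip_add_left' μ _ _ _, ih, Finset.sum_insert ha]

lemma Lip_sum_right {ι : Type*} (s : Finset ι) (f : ℂ → H →L[ℂ] H) (g : ι → ℂ → H →L[ℂ] H) :
    μ.Lip f (fun z => ∑ i ∈ s, g i z) = ∑ i ∈ s, μ.Lip f (g i) := by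
  classical
  induction s using Finset.induction with
  | empty => simpa using Lip_zero_right μ f
  | @insert a s ha ih =>
    have h2 : (fun z => ∑ i ∈ insert a s, g i z)
        = fun z => g a z + ∑ i ∈ s, g i z := by
      funext z; rw [Finset.sum_insert ha]
    rw [h2, Lip_add_right' μ _ _ _, ih, Finset.sum_insert ha]

lemma Rip_mono' (m k : ℕ) (a b : H →L[ℂ] H) :
    μ.Rip (fun z => z ^ m • a) (fun z => z ^ k • b)
      = adjoint a * μ.mom ((m : ℤ) - (k : ℤ)) * b := by
  have h1 : (fun z : ℂ => z ^ m • a) = fun z => (z ^ m • (1 : H →L[ℂ] H)) * a := by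
    funext z; rw [smul_mul_assoc, one_mul]
  have h2 : (fun z : ℂ => z ^ k • b) = fun z => (z ^ k • (1 : H →L[ℂ] H)) * b := by
    funext z; rw [smul_mul_assoc, one_mul]
  rw [h1, h2, μ.Rip_op_left a _ _, μ.Rip_op_right b _ _, μ.Rip_mono m k, mul_assoc]

lemma Lip_mono' (m k : ℕ) (a b : H →L[ℂ] H) :
    μ.Lip (fun z => z ^ m • a) (fun z => z ^ k • b)
      = b * μ.mom ((m : ℤ) - (k : ℤ)) * adjoint a := by
  have h1 : (fun z : ℂ => z ^ m • a) = fun z => a * (z ^ m • (1 : H →L[ℂ] H)) := by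
    funext z; rw [mul_smul_comm, mul_one]
  have h2 : (fun z : ℂ => z ^ k • b) = fun z => b * (z ^ k • (1 : H →L[ℂ] H)) := by
    funext z; rw [mul_smul_comm, mul_one]
  rw [h1, h2, μ.Lip_op_left a _ _, μ.Lip_op_right b _ _, μ.Lip_mono m k, mul_assoc]

lemma Rip_poly (N M : ℕ) (a b : ℕ → H →L[ℂ] H) :
    μ.Rip (fun z => ∑ k ∈ Finset.range N, z ^ k • a k)
        (fun z => ∑ j ∈ Finset.range M, z ^ j • b j)
      = ∑ k ∈ Finset.range N, ∑ j ∈ Finset.range M,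
          adjoint (a k) * μ.mom ((k : ℤ) - (j : ℤ)) * b j := by
  rw [Rip_sum_left]
  refine Finset.sum_congr rfl fun k _ => ?_
  rw [Rip_sum_right]
  exact Finset.sum_congr rfl fun j _ => Rip_mono' μ k j (a k) (b j)

lemma Lip_poly (N M : ℕ) (a b : ℕ → H →L[ℂ] H) :
    μ.Lip (fun z => ∑ k ∈ Finset.range N, z ^ k • a k)
        (fun z => ∑ j ∈ Finset.range M, z ^ j • b j)
      = ∑ k ∈ Finset.range N, ∑ j ∈ Finset.range M,
          b j * μ.mom ((k : ℤ) - (j : ℤ)) * adjoint (a k) := by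
  rw [Lip_sum_left]
  refine Finset.sum_congr rfl fun k _ => ?_
  rw [Lip_sum_right]
  exact Finset.sum_congr rfl fun j _ => Lip_mono' μ k j (a k) (b j)

lemma Rip_shift (N : ℕ) (a b : ℕ → H →L[ℂ] H) :
    μ.Rip (fun z => ∑ k ∈ Finset.range N, z ^ (k + 1) • a k)
        (fun z => ∑ j ∈ Finset.range N, z ^ (j + 1) • b j)
      = μ.Rip (fun z => ∑ k ∈ Finset.range N, z ^ k • a k)
          (fun z => ∑ j ∈ Finset.range N, z ^ j • b j) := by
  have ha : (fun z : ℂ => ∑ k ∈ Finset.range N, z ^ (k + 1) • a k)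
      = fun z => ∑ k ∈ Finset.range (N + 1), z ^ k • (fun i => if i = 0 then 0 else a (i - 1)) k := by
    funext z
    rw [Finset.sum_range_succ' (fun k => z ^ k • (fun i => if i = 0 then 0 else a (i - 1)) k) N]
    simp
  have hb : (fun z : ℂ => ∑ j ∈ Finset.range N, z ^ (j + 1) • b j)
      = fun z => ∑ j ∈ Finset.range (N + 1), z ^ j • (fun i => if i = 0 then 0 else b (i - 1)) j := by
    funext z
    rw [Finset.sum_range_succ' (fun k => z ^ k • (fun i => if i = 0 then 0 else b (i - 1)) k) N]
    simp
  rw [ha, hb, Rip_poly, Rip_poly]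
  rw [Finset.sum_range_succ' _ N]
  have hzero : ∑ j ∈ Finset.range (N + 1),
      adjoint ((fun i => if i = 0 then 0 else a (i - 1)) 0) * μ.mom (((0 : ℕ) : ℤ) - (j : ℤ))
        * (fun i => if i = 0 then 0 else b (i - 1)) j = 0 := by
    refine Finset.sum_eq_zero fun j _ => ?_
    simp
  rw [hzero, add_zero]
  refine Finset.sum_congr rfl fun k _ => ?_
  rw [Finset.sum_range_succ' _ N]
  have hzero2 : adjoint ((fun i => if i = 0 then 0 else a (i - 1)) (k + 1))
      * μ.mom (((k + 1 : ℕ) : ℤ) - ((0 : ℕ) : ℤ)) * (fun i => if i = 0 then 0 else b (i - 1)) 0 = 0 := by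
    simp
  rw [hzero2, add_zero]
  refine Finset.sum_congr rfl fun j _ => ?_
  have : (((k + 1 : ℕ) : ℤ) - ((j + 1 : ℕ) : ℤ)) = ((k : ℤ) - (j : ℤ)) := by push_cast; ring
  simp [this]

lemma Lip_shift (N : ℕ) (a b : ℕ → H →L[ℂ] H) :
    μ.Lip (fun z => ∑ k ∈ Finset.range N, z ^ (k + 1) • a k)
        (fun z => ∑ j ∈ Finset.range N, z ^ (j + 1) • b j)
      = μ.Lip (fun z => ∑ k ∈ Finset.range N, z ^ k • a k)
          (fun z => ∑ j ∈ Finset.range N, z ^ j • b j) := by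
  have ha : (fun z : ℂ => ∑ k ∈ Finset.range N, z ^ (k + 1) • a k)
      = fun z => ∑ k ∈ Finset.range (N + 1), z ^ k • (fun i => if i = 0 then 0 else a (i - 1)) k := by
    funext z
    rw [Finset.sum_range_succ' (fun k => z ^ k • (fun i => if i = 0 then 0 else a (i - 1)) k) N]
    simp
  have hb : (fun z : ℂ => ∑ j ∈ Finset.range N, z ^ (j + 1) • b j)
      = fun z => ∑ j ∈ Finset.range (N + 1), z ^ j • (fun i => if i = 0 then 0 else b (i - 1)) j := by
    funext z
    rw [Finset.sum_range_succ' (fun k => z ^ k • (fun i => if i = 0 then 0 else b (i - 1)) k) N]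
    simp
  rw [ha, hb, Lip_poly, Lip_poly]
  rw [Finset.sum_range_succ' _ N]
  have hzero : ∑ j ∈ Finset.range (N + 1),
      (fun i => if i = 0 then 0 else b (i - 1)) j * μ.mom (((0 : ℕ) : ℤ) - (j : ℤ))
        * adjoint ((fun i => if i = 0 then 0 else a (i - 1)) 0) = 0 := by
    refine Finset.sum_eq_zero fun j _ => ?_
    simp
  rw [hzero, add_zero]
  refine Finset.sum_congr rfl fun k _ => ?_
  rw [Finset.sum_range_succ' _ N]
  have hzero2 : (fun i => if i = 0 then 0 else b (i - 1)) 0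
      * μ.mom (((k + 1 : ℕ) : ℤ) - ((0 : ℕ) : ℤ)) * adjoint ((fun i => if i = 0 then 0 else a (i - 1)) (k + 1)) = 0 := by
    simp
  rw [hzero2, add_zero]
  refine Finset.sum_congr rfl fun j _ => ?_
  have : (((k + 1 : ℕ) : ℤ) - ((j + 1 : ℕ) : ℤ)) = ((k : ℤ) - (j : ℤ)) := by push_cast; ring
  simp [this]

end Part1
section Part2

variable {H : Type*} [NormedAddCommGroup H] [InnerProductSpace ℂ H] [CompleteSpace H]

lemma inv_norm_le {T : H →L[ℂ] H} (hT : IsUnit T) {β : ℝ} (hβ : 0 < β)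
    (hlow : ∀ c : H, β * ‖c‖ ≤ ‖T c‖) : ‖((hT.unit⁻¹ : (H →L[ℂ] H)ˣ) : H →L[ℂ] H)‖ ≤ 1 / β := by
  refine ContinuousLinearMap.opNorm_le_bound _ (by positivity) fun d => ?_
  have h1 : T (((hT.unit⁻¹ : (H →L[ℂ] H)ˣ) : H →L[ℂ] H) d) = d := by
    have := hT.unit.mul_inv
    calc T (((hT.unit⁻¹ : (H →L[ℂ] H)ˣ) : H →L[ℂ] H) d)
        = ((hT.unit : H →L[ℂ] H) * ((hT.unit⁻¹ : (H →L[ℂ] H)ˣ) : H →L[ℂ] H)) d := by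
          rw [ContinuousLinearMap.mul_apply, IsUnit.unit_spec]
      _ = d := by rw [this]; simp
  have h2 := hlow (((hT.unit⁻¹ : (H →L[ℂ] H)ˣ) : H →L[ℂ] H) d)
  rw [h1] at h2
  rw [div_mul_eq_mul_div, le_div_iff₀ hβ]
  linarith [h2]

lemma unit_of_close {T S : H →L[ℂ] H} (hT : IsUnit T) {β : ℝ} (hβ : 0 < β)
    (hlow : ∀ c : H, β * ‖c‖ ≤ ‖T c‖) (hclose : ‖S - T‖ < β) : IsUnit S := by
  set u := hT.unit
  have hinv : ‖((u⁻¹ : (H →L[ℂ] H)ˣ) : H →L[ℂ] H)‖ ≤ 1 / β := inv_norm_le hT hβ hlow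
  set Δ := S - T with hΔ
  have hsmall : ‖-(((u⁻¹ : (H →L[ℂ] H)ˣ) : H →L[ℂ] H) * Δ)‖ < 1 := by
    rw [norm_neg]
    calc ‖((u⁻¹ : (H →L[ℂ] H)ˣ) : H →L[ℂ] H) * Δ‖
        ≤ ‖((u⁻¹ : (H →L[ℂ] H)ˣ) : H →L[ℂ] H)‖ * ‖Δ‖ := norm_mul_le _ _
      _ ≤ (1 / β) * ‖Δ‖ := by
          apply mul_le_mul_of_nonneg_right hinv (norm_nonneg _)
      _ < (1 / β) * β := by
          apply mul_lt_mul_of_pos_left hclose (by positivity)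
      _ = 1 := by field_simp
  have hu2 : IsUnit ((1 : H →L[ℂ] H) + ((u⁻¹ : (H →L[ℂ] H)ˣ) : H →L[ℂ] H) * Δ) := by
    have := (Units.oneSub _ hsmall).isUnit
    simpa using this
  have : S = (u : H →L[ℂ] H) * ((1 : H →L[ℂ] H) + ((u⁻¹ : (H →L[ℂ] H)ˣ) : H →L[ℂ] H) * Δ) := by
    rw [mul_add, mul_one, ← mul_assoc]
    rw [u.mul_inv]
    rw [one_mul, hΔ]
    simp [u, IsUnit.unit_spec]
  rw [this]
  exact (u.isUnit).mul hu2

lemma unit_on_disk {F : ℂ → H →L[ℂ] H} (hF : Continuous F) (hF0 : IsUnit (F 0))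
    (ε : ℝ) (hε : 0 < ε) (N : ℕ)
    (hlow : ∀ z : ℂ, ‖z‖ ≤ 1 → ∀ c : H, ε * ‖z‖ ^ N * ‖c‖ ≤ ‖F z c‖) :
    ∀ z : ℂ, ‖z‖ ≤ 1 → IsUnit (F z) := by
  intro z hz
  by_contra hbad
  have hz0 : z ≠ 0 := by rintro rfl; exact hbad hF0
  have hznorm : 0 < ‖z‖ := norm_pos_iff.2 hz0
  set p : ℝ → H →L[ℂ] H := fun t => F ((t : ℂ) * z) with hp
  have hpc : Continuous p := hF.comp (by continuity)
  set Bad : Set ℝ := Set.Icc (0 : ℝ) 1 ∩ p ⁻¹' {x | ¬ IsUnit x} with hBad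
  have hclosed : IsClosed Bad :=
    IsClosed.inter isClosed_Icc ((Units.isOpen.isClosed_compl).preimage hpc)
  have hne : Bad.Nonempty := ⟨1, ⟨by norm_num, by simpa [hp] using hbad⟩⟩
  have hbdd : BddBelow Bad := ⟨0, fun t ht => ht.1.1⟩
  set τ := sInf Bad with hτdef
  have hτmem : τ ∈ Bad := hclosed.csInf_mem hne hbdd
  have hτIcc : τ ∈ Set.Icc (0 : ℝ) 1 := hτmem.1
  have hτbad : ¬ IsUnit (p τ) := hτmem.2
  have hτpos : 0 < τ := by
    rcases lt_or_eq_of_le hτIcc.1 with h | h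
    · exact h
    · exfalso; apply hτbad; rw [hp]; simp only [← h]; norm_num; exact hF0
  -- lower bound constant on [τ/2, τ]
  set β₀ : ℝ := ε * (τ / 2 * ‖z‖) ^ N with hβ₀
  have hβ₀pos : 0 < β₀ := by positivity
  have hlow' : ∀ t : ℝ, τ / 2 ≤ t → t ≤ τ → ∀ c : H, β₀ * ‖c‖ ≤ ‖p t c‖ := by
    intro t h1 h2 c
    have ht0 : 0 ≤ t := le_trans (by positivity) h1
    have htz : ‖(t : ℂ) * z‖ = t * ‖z‖ := by
      rw [norm_mul, Complex.norm_real, Real.norm_eq_abs, abs_of_nonneg ht0]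
    have htle : ‖(t : ℂ) * z‖ ≤ 1 := by
      rw [htz]
      have : t ≤ 1 := le_trans h2 hτIcc.2
      calc t * ‖z‖ ≤ 1 * 1 := by
            apply mul_le_mul this hz (norm_nonneg z) (by norm_num)
        _ = 1 := by norm_num
    have := hlow _ htle c
    refine le_trans ?_ this
    apply mul_le_mul_of_nonneg_right _ (norm_nonneg c)
    rw [hβ₀]
    apply mul_le_mul_of_nonneg_left _ (le_of_lt hε)
    apply pow_le_pow_left₀ (by positivity)
    rw [htz]
    exact mul_le_mul_of_nonneg_right h1 (norm_nonneg z)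
  -- choose t close to τ
  have hcont : ContinuousAt p τ := hpc.continuousAt
  rcases Metric.continuousAt_iff.1 hcont β₀ hβ₀pos with ⟨δ, hδpos, hδ⟩
  set t := max (τ / 2) (τ - δ / 2) with htdef
  have ht1 : τ / 2 ≤ t := le_max_left _ _
  have ht2 : t < τ := by
    apply max_lt (by linarith) (by linarith)
  have htIcc : t ∈ Set.Icc (0 : ℝ) 1 := ⟨by linarith, by linarith [hτIcc.2]⟩
  have htgood : IsUnit (p t) := by
    by_contra hc
    have : t ∈ Bad := ⟨htIcc, hc⟩
    have := csInf_le hbdd this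
    rw [← hτdef] at this
    linarith
  have htclose : ‖p τ - p t‖ < β₀ := by
    have : dist t τ < δ := by
      rw [Real.dist_eq, abs_of_nonpos (by linarith)]
      have : τ - δ / 2 ≤ t := le_max_right _ _
      linarith
    have := hδ this
    rw [dist_eq_norm] at this
    rw [← norm_neg]
    simpa [neg_sub] using this
  exact hτbad (unit_of_close htgood hβ₀pos (hlow' t ht1 (le_of_lt ht2)) htclose)

end Part2
section Part3

variable {H : Type*} [NormedAddCommGroup H] [InnerProductSpace ℂ H] [CompleteSpace H]

/-- lower coefficients of the monic right polynomial, as a function on `ℕ`. -/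
def bR (μ : OpMeasure H) (n : ℕ) : ℕ → H →L[ℂ] H :=
  fun k => if h : k < n then phiRcoef μ.mom n ⟨k, h⟩ else 0

/-- all coefficients of the monic right polynomial. -/
def CR (μ : OpMeasure H) (n : ℕ) : ℕ → H →L[ℂ] H :=
  fun j => if j = n then 1 else -(bR μ n j)

lemma phiR_eq (μ : OpMeasure H) (n : ℕ) :
    phiR μ.mom n = fun z => ∑ j ∈ Finset.range (n + 1), z ^ j • CR μ n j := by
  funext z
  rw [phiR, Finset.sum_range_succ]
  have h1 : CR μ n n = 1 := by simp [CR]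
  have h2 : ∑ j ∈ Finset.range n, z ^ j • CR μ n j
      = -∑ j ∈ Finset.range n, z ^ j • bR μ n j := by
    rw [← Finset.sum_neg_distrib]
    refine Finset.sum_congr rfl fun j hj => ?_
    have : j ≠ n := Nat.ne_of_lt (Finset.mem_range.1 hj)
    simp [CR, this]
  have h3 : ∑ k : Fin n, z ^ (k : ℕ) • phiRcoef μ.mom n k
      = ∑ j ∈ Finset.range n, z ^ j • bR μ n j := by
    rw [← Fin.sum_univ_eq_sum_range (fun j => z ^ j • bR μ n j) n]
    refine Finset.sum_congr rfl fun k _ => ?_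
    have : bR μ n (k : ℕ) = phiRcoef μ.mom n k := by simp [bR, k.isLt]
    rw [this]
  rw [h1, h2, h3]
  abel

lemma Rip_mono_phiR (μ : OpMeasure H) (n : ℕ) (hTR : IsUnit (TmatR μ.mom n))
    (k : ℕ) (hk : k < n) :
    μ.Rip (fun z => z ^ k • (1 : H →L[ℂ] H)) (phiR μ.mom n) = 0 := by
  rw [phiR_eq]
  have h1 : μ.Rip (fun z => z ^ k • (1 : H →L[ℂ] H))
      (fun z => ∑ j ∈ Finset.range (n + 1), z ^ j • CR μ n j)
      = ∑ j ∈ Finset.range (n + 1),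
          adjoint (1 : H →L[ℂ] H) * μ.mom ((k : ℤ) - (j : ℤ)) * CR μ n j := by
    rw [Rip_sum_right]
    exact Finset.sum_congr rfl fun j _ => Rip_mono' μ k j 1 (CR μ n j)
  rw [h1]
  have hadj1 : adjoint (1 : H →L[ℂ] H) = 1 := by rw [← star_eq_adjoint, star_one]
  simp only [hadj1, one_mul]
  rw [Finset.sum_range_succ]
  have h2 : ∑ j ∈ Finset.range n, μ.mom ((k : ℤ) - (j : ℤ)) * CR μ n j
      = -∑ j ∈ Finset.range n, μ.mom ((k : ℤ) - (j : ℤ)) * bR μ n j := by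
    rw [← Finset.sum_neg_distrib]
    refine Finset.sum_congr rfl fun j hj => ?_
    have : j ≠ n := Nat.ne_of_lt (Finset.mem_range.1 hj)
    simp [CR, this]
  have h3 : CR μ n n = 1 := by simp [CR]
  rw [h2, h3, mul_one]
  have h4 : ∑ j ∈ Finset.range n, μ.mom ((k : ℤ) - (j : ℤ)) * bR μ n j
      = (TmatR μ.mom n).mulVec (phiRcoef μ.mom n) ⟨k, hk⟩ := by
    rw [Matrix.mulVec, dotProduct]
    rw [← Fin.sum_univ_eq_sum_range (fun j => μ.mom ((k : ℤ) - (j : ℤ)) * bR μ n j) n]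
    refine Finset.sum_congr rfl fun j _ => ?_
    have : bR μ n (j : ℕ) = phiRcoef μ.mom n j := by simp [bR, j.isLt]
    rw [this, TmatR]
  have h5 : (TmatR μ.mom n).mulVec (phiRcoef μ.mom n) = nuR μ.mom n := by
    rw [phiRcoef, Matrix.mulVec_mulVec, Ring.mul_inverse_cancel _ hTR, Matrix.one_mulVec]
  rw [h4, h5, nuR]
  simp

lemma Rip_op_phiR (μ : OpMeasure H) (n : ℕ) (hTR : IsUnit (TmatR μ.mom n))
    (k : ℕ) (hk : k < n) (a : H →L[ℂ] H) :
    μ.Rip (fun z => z ^ k • a) (phiR μ.mom n) = 0 := by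
  have h1 : (fun z : ℂ => z ^ k • a) = fun z => (z ^ k • (1 : H →L[ℂ] H)) * a := by
    funext z; rw [smul_mul_assoc, one_mul]
  rw [h1, μ.Rip_op_left a _ _, Rip_mono_phiR μ n hTR k hk, mul_zero]

lemma Rip_lowpoly_phiR (μ : OpMeasure H) (n : ℕ) (hTR : IsUnit (TmatR μ.mom n))
    (N : ℕ) (hN : N ≤ n) (d : ℕ → H →L[ℂ] H) :
    μ.Rip (fun z => ∑ i ∈ Finset.range N, z ^ i • d i) (phiR μ.mom n) = 0 := by
  rw [Rip_sum_left]
  refine Finset.sum_eq_zero fun i hi => ?_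
  exact Rip_op_phiR μ n hTR i (lt_of_lt_of_le (Finset.mem_range.1 hi) hN) (d i)

lemma Rip_phiR_lowpoly (μ : OpMeasure H) (n : ℕ) (hTR : IsUnit (TmatR μ.mom n))
    (N : ℕ) (hN : N ≤ n) (d : ℕ → H →L[ℂ] H) :
    μ.Rip (phiR μ.mom n) (fun z => ∑ i ∈ Finset.range N, z ^ i • d i) = 0 := by
  have := μ.Rip_adjoint (fun z => ∑ i ∈ Finset.range N, z ^ i • d i) (phiR μ.mom n)
  rw [Rip_lowpoly_phiR μ n hTR N hN d] at this
  rw [← this, ← star_eq_adjoint, star_zero]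

lemma Rip_zn_phiR (μ : OpMeasure H) (n : ℕ) (hTR : IsUnit (TmatR μ.mom n)) :
    μ.Rip (fun z => z ^ n • (1 : H →L[ℂ] H)) (phiR μ.mom n) = kappaR μ.mom n := by
  rw [phiR_eq]
  have h1 : μ.Rip (fun z => z ^ n • (1 : H →L[ℂ] H))
      (fun z => ∑ j ∈ Finset.range (n + 1), z ^ j • CR μ n j)
      = ∑ j ∈ Finset.range (n + 1),
          adjoint (1 : H →L[ℂ] H) * μ.mom ((n : ℤ) - (j : ℤ)) * CR μ n j := by
    rw [Rip_sum_right]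
    exact Finset.sum_congr rfl fun j _ => Rip_mono' μ n j 1 (CR μ n j)
  rw [h1]
  have hadj1 : adjoint (1 : H →L[ℂ] H) = 1 := by rw [← star_eq_adjoint, star_one]
  simp only [hadj1, one_mul]
  rw [Finset.sum_range_succ]
  have h3 : CR μ n n = 1 := by simp [CR]
  rw [h3, mul_one, sub_self]
  have h2 : ∑ j ∈ Finset.range n, μ.mom ((n : ℤ) - (j : ℤ)) * CR μ n j
      = -∑ j ∈ Finset.range n, μ.mom ((n : ℤ) - (j : ℤ)) * bR μ n j := by
    rw [← Finset.sum_neg_distrib]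
    refine Finset.sum_congr rfl fun j hj => ?_
    have : j ≠ n := Nat.ne_of_lt (Finset.mem_range.1 hj)
    simp [CR, this]
  rw [h2, kappaR]
  have h4 : ∑ k : Fin n, adjoint (nuR μ.mom n k) * phiRcoef μ.mom n k
      = ∑ j ∈ Finset.range n, μ.mom ((n : ℤ) - (j : ℤ)) * bR μ n j := by
    rw [← Fin.sum_univ_eq_sum_range (fun j => μ.mom ((n : ℤ) - (j : ℤ)) * bR μ n j) n]
    refine Finset.sum_congr rfl fun k _ => ?_
    have hb : bR μ n (k : ℕ) = phiRcoef μ.mom n k := by simp [bR, k.isLt]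
    have hnu : adjoint (nuR μ.mom n k) = μ.mom ((n : ℤ) - (k : ℤ)) := by
      rw [nuR]
      rw [← μ.mom_neg ((k : ℤ) - (n : ℤ))]
      congr 1; ring
    rw [hb, hnu]
  rw [h4]
  abel

lemma Rip_phiR_phiR (μ : OpMeasure H) (n : ℕ) (hTR : IsUnit (TmatR μ.mom n)) :
    μ.Rip (phiR μ.mom n) (phiR μ.mom n) = kappaR μ.mom n := by
  have step : μ.Rip (phiR μ.mom n) (phiR μ.mom n)
      = μ.Rip (fun z => ∑ j ∈ Finset.range (n + 1), z ^ j • CR μ n j) (phiR μ.mom n) := by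
    rw [phiR_eq]
  rw [step, Rip_sum_left]
  have key : ∀ j ∈ Finset.range (n + 1),
      μ.Rip (fun z => z ^ j • CR μ n j) (phiR μ.mom n)
        = if j = n then kappaR μ.mom n else 0 := by
    intro j hj
    rcases Nat.lt_or_ge j n with h | h
    · rw [if_neg (Nat.ne_of_lt h)]
      exact Rip_op_phiR μ n hTR j h _
    · have hjn : j = n := le_antisymm (Nat.lt_succ_iff.1 (Finset.mem_range.1 hj)) h
      rw [if_pos hjn]
      rw [show (fun z : ℂ => z ^ j • CR μ n j) = fun z => z ^ n • (1 : H →L[ℂ] H) from by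
        rw [hjn]; simp [CR]]
      exact Rip_zn_phiR μ n hTR
  rw [Finset.sum_congr rfl key]
  rw [Finset.sum_ite_eq' (Finset.range (n+1)) n (fun _ => kappaR μ.mom n)]
  rw [if_pos (Finset.self_mem_range_succ n)]

end Part3
section Part3b

variable {H : Type*} [NormedAddCommGroup H] [InnerProductSpace ℂ H] [CompleteSpace H]

/-- Coefficients of the difference quotient `(Φ(w) - Φ(z0))/(w - z0)`. -/
def gcR (μ : OpMeasure H) (n : ℕ) (z0 : ℂ) : ℕ → H →L[ℂ] H :=
  fun i => ∑ j ∈ Finset.range (n + 1), (if i < j then z0 ^ (j - 1 - i) else 0) • CR μ n j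

/-- The difference quotient polynomial. -/
def gR (μ : OpMeasure H) (n : ℕ) (z0 : ℂ) : ℂ → H →L[ℂ] H :=
  fun w => ∑ i ∈ Finset.range n, w ^ i • gcR μ n z0 i

lemma factR (μ : OpMeasure H) (n : ℕ) (z0 : ℂ) (w : ℂ) :
    phiR μ.mom n w = (w - z0) • gR μ n z0 w + phiR μ.mom n z0 := by
  have key : (w - z0) • gR μ n z0 w
      = ∑ j ∈ Finset.range (n + 1), (w ^ j - z0 ^ j) • CR μ n j := by
    have e1 : gR μ n z0 w
        = ∑ i ∈ Finset.range n, ∑ j ∈ Finset.range (n + 1),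
            (w ^ i * (if i < j then z0 ^ (j - 1 - i) else 0)) • CR μ n j := by
      rw [gR]
      refine Finset.sum_congr rfl fun i _ => ?_
      rw [gcR, Finset.smul_sum]
      refine Finset.sum_congr rfl fun j _ => ?_
      rw [smul_smul]
    rw [e1, Finset.sum_comm, Finset.smul_sum]
    refine Finset.sum_congr rfl fun j hj => ?_
    have hjn : j ≤ n := Nat.lt_succ_iff.1 (Finset.mem_range.1 hj)
    have e2 : ∑ i ∈ Finset.range n, (w ^ i * (if i < j then z0 ^ (j - 1 - i) else 0)) • CR μ n j
        = (∑ i ∈ Finset.range n, w ^ i * (if i < j then z0 ^ (j - 1 - i) else 0)) • CR μ n j := by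
      rw [Finset.sum_smul]
    rw [e2, smul_smul]
    congr 1
    have e3 : ∑ i ∈ Finset.range n, w ^ i * (if i < j then z0 ^ (j - 1 - i) else 0)
        = ∑ i ∈ Finset.range j, w ^ i * z0 ^ (j - 1 - i) := by
      rw [← Finset.sum_subset (Finset.range_subset_range.2 hjn)]
      · refine Finset.sum_congr rfl fun i hi => ?_
        rw [if_pos (Finset.mem_range.1 hi)]
      · intro i _ hi
        rw [if_neg (by simpa using hi), mul_zero]
    rw [e3, mul_comm, geom_sum₂_mul]
  have e4 : (∑ j ∈ Finset.range (n + 1), w ^ j • CR μ n j)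
      = ∑ j ∈ Finset.range (n + 1), (w ^ j - z0 ^ j) • CR μ n j
        + ∑ j ∈ Finset.range (n + 1), z0 ^ j • CR μ n j := by
    rw [← Finset.sum_add_distrib]
    refine Finset.sum_congr rfl fun j _ => ?_
    rw [← add_smul, sub_add_cancel]
  simp only [phiR_eq]
  rw [key, e4]

end Part3b
section Part3c

variable {H : Type*} [NormedAddCommGroup H] [InnerProductSpace ℂ H] [CompleteSpace H]

lemma gR_def (μ : OpMeasure H) (n : ℕ) (z0 : ℂ) :
    gR μ n z0 = fun w => ∑ i ∈ Finset.range n, w ^ i • gcR μ n z0 i := rfl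

set_option maxHeartbeats 1000000 in
lemma identR (μ : OpMeasure H) (n : ℕ) (hTR : IsUnit (TmatR μ.mom n)) (hn : 0 < n) (z0 : ℂ) :
    kappaR μ.mom n
      = ((1 : ℂ) - z0 * (starRingEnd ℂ) z0) • μ.Rip (gR μ n z0) (gR μ n z0)
        + z0 • (adjoint (phiR μ.mom n z0) * μ.Rip (fun _ => 1) (gR μ n z0))
        + (starRingEnd ℂ) z0 • (adjoint (μ.Rip (fun _ => 1) (gR μ n z0)) * phiR μ.mom n z0)
        - adjoint (phiR μ.mom n z0) * μ.mom 0 * phiR μ.mom n z0 := by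
  set Φ : ℂ → H →L[ℂ] H := phiR μ.mom n with hΦdef
  set g : ℂ → H →L[ℂ] H := gR μ n z0 with hgdef
  set K : H →L[ℂ] H := phiR μ.mom n z0 with hKdef
  set m : H →L[ℂ] H := μ.Rip (fun _ => 1) g with hmdef
  set G : H →L[ℂ] H := μ.Rip g g with hGdef
  set h : ℂ → H →L[ℂ] H := fun w => w • g w with hhdef
  set v : ℂ → H →L[ℂ] H := fun w => K - z0 • g w with hvdef
  have hone : (fun _ : ℂ => (1 : H →L[ℂ] H)) = fun z : ℂ => z ^ 0 • (1 : H →L[ℂ] H) := by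
    funext z; simp
  have hconstK : (fun _ : ℂ => K) = fun z : ℂ => (fun _ : ℂ => (1 : H →L[ℂ] H)) z * K := by
    funext z; simp
  -- pointwise decomposition
  have hpt : ∀ w, Φ w = h w + v w := by
    intro w
    rw [hhdef, hvdef, hΦdef]
    have := factR μ n z0 w
    rw [hgdef.symm] at this
    rw [this, hKdef, sub_smul]
    abel
  -- orthogonality facts
  have hgΦ : μ.Rip g Φ = 0 := by
    rw [hgdef, hΦdef, gR_def]
    exact Rip_lowpoly_phiR μ n hTR n le_rfl (gcR μ n z0)
  have hΦg : μ.Rip Φ g = 0 := by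
    rw [hgdef, hΦdef, gR_def]
    exact Rip_phiR_lowpoly μ n hTR n le_rfl (gcR μ n z0)
  have hcΦ : μ.Rip (fun _ => K) Φ = 0 := by
    have e : (fun _ : ℂ => K) = fun z : ℂ => ∑ i ∈ Finset.range 1, z ^ i • (fun _ : ℕ => K) i := by
      funext z; simp
    rw [e, hΦdef]
    exact Rip_lowpoly_phiR μ n hTR 1 hn (fun _ => K)
  have hΦc : μ.Rip Φ (fun _ => K) = 0 := by
    have e : (fun _ : ℂ => K) = fun z : ℂ => ∑ i ∈ Finset.range 1, z ^ i • (fun _ : ℕ => K) i := by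
      funext z; simp
    rw [e, hΦdef]
    exact Rip_phiR_lowpoly μ n hTR 1 hn (fun _ => K)
  -- basic pairings
  have hgone : μ.Rip g (fun _ => 1) = adjoint m := by
    rw [hmdef, ← μ.Rip_adjoint]
  have hcc : μ.Rip (fun _ => K) (fun _ => K) = adjoint K * μ.mom 0 * K := by
    have e : (fun _ : ℂ => K) = fun z : ℂ => z ^ 0 • K := by funext z; simp
    rw [e]
    simpa using Rip_mono' μ 0 0 K K
  have hcg : μ.Rip (fun _ => K) g = adjoint K * m := by
    rw [hconstK, μ.Rip_op_left K _ g, hmdef]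
  have hgc : μ.Rip g (fun _ => K) = adjoint m * K := by
    rw [hconstK, μ.Rip_op_right K g _, hgone]
  have hcc' : μ.Rip (fun _ => K) (fun _ => K) = adjoint K * μ.mom 0 * K := hcc
  -- shift invariance
  have hhh : μ.Rip h h = G := by
    have e : h = fun w => ∑ i ∈ Finset.range n, w ^ (i + 1) • gcR μ n z0 i := by
      funext w
      rw [hhdef, hgdef, gR_def]
      simp only [Finset.smul_sum, smul_smul]
      exact Finset.sum_congr rfl fun i _ => by rw [← pow_succ']
    rw [e, hGdef, hgdef, gR_def]
    exact Rip_shift μ n (gcR μ n z0) (gcR μ n z0)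
  -- second-slot pairings with v
  have hgv : μ.Rip g v = adjoint m * K - z0 • G := by
    rw [hvdef]
    rw [Rip_sub_right μ g (fun _ => K) (fun w => z0 • g w)]
    rw [hgc, μ.Rip_smul_right z0 g g, hGdef]
  have hcv : μ.Rip (fun _ => K) v = adjoint K * μ.mom 0 * K - z0 • (adjoint K * m) := by
    rw [hvdef]
    rw [Rip_sub_right μ (fun _ => K) (fun _ => K) (fun w => z0 • g w)]
    rw [hcc', μ.Rip_smul_right z0 _ g, hcg]
  -- first-slot pairing of v with g and const
  have hvg : μ.Rip v g = adjoint K * m - (starRingEnd ℂ) z0 • G := by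
    rw [hvdef]
    rw [Rip_sub_left μ (fun _ => K) (fun w => z0 • g w) g]
    rw [hcg, μ.Rip_smul_left z0 g g, hGdef]
  have hvc : μ.Rip v (fun _ => K)
      = adjoint K * μ.mom 0 * K - (starRingEnd ℂ) z0 • (adjoint m * K) := by
    rw [hvdef]
    rw [Rip_sub_left μ (fun _ => K) (fun w => z0 • g w) (fun _ => K)]
    rw [hcc', μ.Rip_smul_left z0 g (fun _ => K), hgc]
  -- h against things, first slot
  have hhfun : ∀ (f : ℂ → H →L[ℂ] H), μ.Rip h f = μ.Rip Φ f - μ.Rip v f := by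
    intro f
    have h2 := Rip_add_left' μ h v f
    rw [show (fun z => h z + v z) = Φ from (funext hpt).symm] at h2
    rw [h2]; abel
  have hhg : μ.Rip h g = (starRingEnd ℂ) z0 • G - adjoint K * m := by
    rw [hhfun g, hΦg, hvg]; abel
  have hhc : μ.Rip h (fun _ => K)
      = (starRingEnd ℂ) z0 • (adjoint m * K) - adjoint K * μ.mom 0 * K := by
    rw [hhfun (fun _ => K), hΦc, hvc]; abel
  -- second-slot pairings with v
  have hvfun : ∀ (f : ℂ → H →L[ℂ] H), μ.Rip f h = μ.Rip f Φ - μ.Rip f v := by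
    intro f
    have := Rip_add_right' μ f h v
    rw [show (fun z => h z + v z) = Φ from (funext hpt).symm] at this
    rw [this]; abel
  have hgh : μ.Rip g h = z0 • G - adjoint m * K := by
    rw [hvfun g, hgΦ, hgv]; abel
  have hch : μ.Rip (fun _ => K) h = z0 • (adjoint K * m) - adjoint K * μ.mom 0 * K := by
    rw [hvfun (fun _ => K), hcΦ, hcv]; abel
  -- first-slot with v
  have hvh : μ.Rip v h
      = (z0 • (adjoint K * m) - adjoint K * μ.mom 0 * K)
        - (starRingEnd ℂ) z0 • (z0 • G - adjoint m * K) := by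
    rw [hvdef]
    rw [Rip_sub_left μ (fun _ => K) (fun w => z0 • g w) h]
    rw [hch, μ.Rip_smul_left z0 g h, hgh]
  have hvv : μ.Rip v v
      = (adjoint K * μ.mom 0 * K - z0 • (adjoint K * m))
        - (starRingEnd ℂ) z0 • (adjoint m * K - z0 • G) := by
    rw [hvdef]
    rw [Rip_sub_left μ (fun _ => K) (fun w => z0 • g w) v]
    rw [hcv, μ.Rip_smul_left z0 g v, hgv]
  have hhv : μ.Rip h v
      = ((starRingEnd ℂ) z0 • (adjoint m * K) - adjoint K * μ.mom 0 * K)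
        - z0 • ((starRingEnd ℂ) z0 • G - adjoint K * m) := by
    rw [hvdef]
    rw [Rip_sub_right μ h (fun _ => K) (fun w => z0 • g w)]
    rw [hhc, μ.Rip_smul_right z0 h g, hhg]
  -- assemble
  have hsplit : μ.Rip Φ Φ = μ.Rip h h + μ.Rip h v + (μ.Rip v h + μ.Rip v v) := by
    have e : Φ = fun w => h w + v w := funext hpt
    conv_lhs => rw [e]
    rw [Rip_add_left' μ h v (fun w => h w + v w),
      Rip_add_right' μ h h v, Rip_add_right' μ v h v]
  have hκ : μ.Rip Φ Φ = kappaR μ.mom n := by rw [hΦdef]; exact Rip_phiR_phiR μ n hTR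
  rw [← hκ, hsplit, hhh, hhv, hvh, hvv]
  module

end Part3c
section Part3d

variable {H : Type*} [NormedAddCommGroup H] [InnerProductSpace ℂ H] [CompleteSpace H]

lemma Rip_pos_re (μ : OpMeasure H) (f : ℂ → H →L[ℂ] H) (x : H) :
    0 ≤ (@inner ℂ H _ (μ.Rip f f x) x).re := by
  simpa using (μ.Rip_pos f).re_inner_nonneg_left x

lemma Lip_pos_re (μ : OpMeasure H) (f : ℂ → H →L[ℂ] H) (x : H) :
    0 ≤ (@inner ℂ H _ (μ.Lip f f x) x).re := by
  simpa using (μ.Lip_pos f).re_inner_nonneg_left x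

lemma mom0_pos_re (μ : OpMeasure H) (x : H) : 0 ≤ (@inner ℂ H _ (μ.mom 0 x) x).re := by
  have h : μ.mom 0
      = μ.Rip (fun z => z ^ 0 • (1 : H →L[ℂ] H)) (fun z => z ^ 0 • (1 : H →L[ℂ] H)) := by
    simpa using (μ.Rip_mono 0 0).symm
  rw [h]
  exact Rip_pos_re μ _ x

lemma kappa_lower_gen {s κ : H →L[ℂ] H} (hpos : s.IsPositive) (hss : s * s = κ)
    (hu : IsUnit s) (c : H) :
    (‖((hu.unit⁻¹ : (H →L[ℂ] H)ˣ) : H →L[ℂ] H)‖⁻¹) ^ 2 * ‖c‖ ^ 2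
      ≤ (@inner ℂ H _ (κ c) c).re := by
  have hsc : (@inner ℂ H _ (κ c) c).re = ‖s c‖ ^ 2 := by
    rw [← hss]
    have h1 : (s * s) c = s (s c) := rfl
    rw [h1]
    have hadj : adjoint s = s := by rw [← star_eq_adjoint]; exact hpos.isSelfAdjoint
    have h2 := adjoint_inner_left s c (s c)
    rw [hadj] at h2
    rw [h2]
    simpa using inner_self_eq_norm_sq (𝕜 := ℂ) (s c)
  rw [hsc]
  set a := ‖((hu.unit⁻¹ : (H →L[ℂ] H)ˣ) : H →L[ℂ] H)‖ with ha
  rcases eq_or_ne a 0 with h0 | h0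
  · rw [h0]
    norm_num
  · have hpos' : 0 < a := lt_of_le_of_ne (norm_nonneg _) (Ne.symm h0)
    have hc : ‖c‖ ≤ a * ‖s c‖ := by
      have h1 : ((hu.unit⁻¹ : (H →L[ℂ] H)ˣ) : H →L[ℂ] H) (s c) = c := by
        have h3 : ((hu.unit⁻¹ : (H →L[ℂ] H)ˣ) : H →L[ℂ] H) * s = 1 := by
          have := hu.unit.inv_mul
          simpa [IsUnit.unit_spec] using this
        have h4 := congrFun (congrArg DFunLike.coe h3) c
        simpa only [ContinuousLinearMap.mul_apply, ContinuousLinearMap.one_apply] using h4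
      calc ‖c‖ = ‖((hu.unit⁻¹ : (H →L[ℂ] H)ˣ) : H →L[ℂ] H) (s c)‖ := by rw [h1]
        _ ≤ a * ‖s c‖ := le_opNorm _ _
    have h4 : a⁻¹ * ‖c‖ ≤ ‖s c‖ := by
      rw [inv_mul_le_iff₀ hpos']
      exact hc
    calc a⁻¹ ^ 2 * ‖c‖ ^ 2 = (a⁻¹ * ‖c‖) ^ 2 := by ring
      _ ≤ ‖s c‖ ^ 2 := by
          apply pow_le_pow_left₀ (by positivity) h4

lemma crossR (μ : OpMeasure H) (n : ℕ) (hTR : IsUnit (TmatR μ.mom n)) (hn : 0 < n)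
    (z0 : ℂ) (hz : 1 ≤ ‖z0‖) (c : H) :
    (@inner ℂ H _ (kappaR μ.mom n c) c).re
      ≤ 2 * ‖z0‖ * ‖μ.Rip (fun _ => 1) (gR μ n z0)‖ * ‖c‖ * ‖phiR μ.mom n z0 c‖ := by
  set K : H →L[ℂ] H := phiR μ.mom n z0 with hK
  set m : H →L[ℂ] H := μ.Rip (fun _ => 1) (gR μ n z0) with hm
  set G : H →L[ℂ] H := μ.Rip (gR μ n z0) (gR μ n z0) with hG
  have hid := identR μ n hTR hn z0
  rw [← hK, ← hm, ← hG] at hid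
  rw [hid]
  simp only [ContinuousLinearMap.add_apply, ContinuousLinearMap.sub_apply,
    ContinuousLinearMap.smul_apply, ContinuousLinearMap.mul_apply]
  rw [inner_sub_left, inner_add_left, inner_add_left]
  rw [inner_smul_left, inner_smul_left, inner_smul_left]
  rw [Complex.sub_re, Complex.add_re, Complex.add_re]
  -- term 1 : nonpositive
  have hreal : (starRingEnd ℂ) ((1 : ℂ) - z0 * (starRingEnd ℂ) z0)
      = (((1 : ℝ) - ‖z0‖ ^ 2 : ℝ) : ℂ) := by
    have h5 : Complex.normSq z0 = ‖z0‖ ^ 2 := by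
      rw [Complex.normSq_eq_norm_sq]
    rw [Complex.mul_conj, map_sub, map_one, Complex.conj_ofReal, h5]
    push_cast
    ring
  have ht1 : ((starRingEnd ℂ) ((1 : ℂ) - z0 * (starRingEnd ℂ) z0)
      * @inner ℂ H _ (G c) c).re ≤ 0 := by
    rw [hreal, Complex.re_ofReal_mul]
    apply mul_nonpos_of_nonpos_of_nonneg
    · nlinarith [hz, norm_nonneg z0]
    · exact Rip_pos_re μ (gR μ n z0) c
  -- term 4 : nonnegative
  have ht4 : 0 ≤ (@inner ℂ H _ (adjoint K (μ.mom 0 (K c))) c).re := by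
    rw [adjoint_inner_left]
    exact mom0_pos_re μ (K c)
  -- cross terms
  have h2 : @inner ℂ H _ (adjoint K (m c)) c = @inner ℂ H _ (m c) (K c) :=
    adjoint_inner_left K c (m c)
  have h3 : @inner ℂ H _ (adjoint m (K c)) c = @inner ℂ H _ (K c) (m c) :=
    adjoint_inner_left m c (K c)
  set t : ℂ := @inner ℂ H _ (m c) (K c) with htd
  have hcross : ((starRingEnd ℂ) z0 * @inner ℂ H _ (adjoint K (m c)) c).re
      + ((starRingEnd ℂ) ((starRingEnd ℂ) z0) * @inner ℂ H _ (adjoint m (K c)) c).re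
      ≤ 2 * ‖z0‖ * ‖m‖ * ‖c‖ * ‖K c‖ := by
    rw [h2, h3, Complex.conj_conj]
    have hconj : @inner ℂ H _ (K c) (m c) = (starRingEnd ℂ) t := by
      rw [htd]; exact (inner_conj_symm _ _).symm
    rw [hconj]
    have he : z0 * (starRingEnd ℂ) t = (starRingEnd ℂ) ((starRingEnd ℂ) z0 * t) := by
      rw [map_mul, Complex.conj_conj]
    rw [he, Complex.conj_re]
    have hre : ((starRingEnd ℂ) z0 * t).re ≤ ‖z0‖ * (‖m‖ * ‖c‖ * ‖K c‖) := by
      calc ((starRingEnd ℂ) z0 * t).re ≤ ‖(starRingEnd ℂ) z0 * t‖ := by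
            exact Complex.re_le_norm _
        _ = ‖z0‖ * ‖t‖ := by rw [norm_mul, RCLike.norm_conj]
        _ ≤ ‖z0‖ * (‖m‖ * ‖c‖ * ‖K c‖) := by
            apply mul_le_mul_of_nonneg_left _ (norm_nonneg z0)
            calc ‖t‖ ≤ ‖m c‖ * ‖K c‖ := by rw [htd]; exact norm_inner_le_norm _ _
              _ ≤ ‖m‖ * ‖c‖ * ‖K c‖ := by
                  apply mul_le_mul_of_nonneg_right (le_opNorm m c) (norm_nonneg _)
    linarith
  linarith

end Part3d
section Part3e

variable {H : Type*} [NormedAddCommGroup H] [InnerProductSpace ℂ H] [CompleteSpace H]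

/-- A `z0`-independent bound constant. -/
def BR (μ : OpMeasure H) (n : ℕ) : ℝ :=
  (∑ i ∈ Finset.range n, ‖μ.mom (0 - (i : ℤ))‖) * (∑ j ∈ Finset.range (n + 1), ‖CR μ n j‖)

lemma BR_nonneg (μ : OpMeasure H) (n : ℕ) : 0 ≤ BR μ n := by
  apply mul_nonneg <;> exact Finset.sum_nonneg fun _ _ => norm_nonneg _

lemma gcR_bound (μ : OpMeasure H) (n : ℕ) (z0 : ℂ) (hz : 1 ≤ ‖z0‖) (i : ℕ) :
    ‖gcR μ n z0 i‖ ≤ ‖z0‖ ^ n * ∑ j ∈ Finset.range (n + 1), ‖CR μ n j‖ := by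
  rw [gcR]
  calc ‖∑ j ∈ Finset.range (n + 1), (if i < j then z0 ^ (j - 1 - i) else 0) • CR μ n j‖
      ≤ ∑ j ∈ Finset.range (n + 1), ‖(if i < j then z0 ^ (j - 1 - i) else 0) • CR μ n j‖ :=
        norm_sum_le _ _
    _ ≤ ∑ j ∈ Finset.range (n + 1), ‖z0‖ ^ n * ‖CR μ n j‖ := by
        refine Finset.sum_le_sum fun j hj => ?_
        rw [norm_smul]
        apply mul_le_mul_of_nonneg_right _ (norm_nonneg _)
        split_ifs with hij
        · rw [norm_pow]
          apply pow_le_pow_right₀ hz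
          have : j ≤ n := Nat.lt_succ_iff.1 (Finset.mem_range.1 hj)
          omega
        · rw [norm_zero]
          positivity
    _ = ‖z0‖ ^ n * ∑ j ∈ Finset.range (n + 1), ‖CR μ n j‖ := by
        rw [Finset.mul_sum]

lemma mR_formula (μ : OpMeasure H) (n : ℕ) (z0 : ℂ) :
    μ.Rip (fun _ => 1) (gR μ n z0)
      = ∑ i ∈ Finset.range n, μ.mom (0 - (i : ℤ)) * gcR μ n z0 i := by
  have hone : (fun _ : ℂ => (1 : H →L[ℂ] H))
      = fun z : ℂ => ∑ k ∈ Finset.range 1, z ^ k • (fun _ : ℕ => (1 : H →L[ℂ] H)) k := by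
    funext z; simp
  rw [hone, gR_def]
  rw [Rip_poly μ 1 n (fun _ => 1) (gcR μ n z0)]
  rw [Finset.sum_range_one]
  refine Finset.sum_congr rfl fun i _ => ?_
  have hadj1 : adjoint (1 : H →L[ℂ] H) = 1 := by rw [← star_eq_adjoint, star_one]
  rw [hadj1, one_mul]
  norm_num

lemma mR_bound (μ : OpMeasure H) (n : ℕ) (z0 : ℂ) (hz : 1 ≤ ‖z0‖) :
    ‖μ.Rip (fun _ => 1) (gR μ n z0)‖ ≤ BR μ n * ‖z0‖ ^ n := by
  rw [mR_formula]
  calc ‖∑ i ∈ Finset.range n, μ.mom (0 - (i : ℤ)) * gcR μ n z0 i‖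
      ≤ ∑ i ∈ Finset.range n, ‖μ.mom (0 - (i : ℤ)) * gcR μ n z0 i‖ := norm_sum_le _ _
    _ ≤ ∑ i ∈ Finset.range n, ‖μ.mom (0 - (i : ℤ))‖
          * (‖z0‖ ^ n * ∑ j ∈ Finset.range (n + 1), ‖CR μ n j‖) := by
        refine Finset.sum_le_sum fun i _ => ?_
        calc ‖μ.mom (0 - (i : ℤ)) * gcR μ n z0 i‖
            ≤ ‖μ.mom (0 - (i : ℤ))‖ * ‖gcR μ n z0 i‖ := norm_mul_le _ _
          _ ≤ _ := mul_le_mul_of_nonneg_left (gcR_bound μ n z0 hz i) (norm_nonneg _)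
    _ = BR μ n * ‖z0‖ ^ n := by
        rw [← Finset.sum_mul, BR]
        ring

lemma phiR_low (μ : OpMeasure H) (n : ℕ) (hTR : IsUnit (TmatR μ.mom n)) (hn : 0 < n)
    (s : H →L[ℂ] H) (hpos : s.IsPositive) (hss : s * s = kappaR μ.mom n) (hu : IsUnit s)
    (z0 : ℂ) (hz : 1 ≤ ‖z0‖) (c : H) :
    (‖((hu.unit⁻¹ : (H →L[ℂ] H)ˣ) : H →L[ℂ] H)‖⁻¹) ^ 2 * ‖c‖
      ≤ 2 * (BR μ n + 1) * ‖z0‖ ^ (n + 1) * ‖phiR μ.mom n z0 c‖ := by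
  rcases eq_or_ne c 0 with rfl | hc
  · simp
  · have hcpos : 0 < ‖c‖ := norm_pos_iff.2 hc
    have h1 := kappa_lower_gen hpos hss hu c
    have h2 := crossR μ n hTR hn z0 hz c
    have h3 : ‖μ.Rip (fun _ => 1) (gR μ n z0)‖ ≤ (BR μ n + 1) * ‖z0‖ ^ n :=
      le_trans (mR_bound μ n z0 hz) (by nlinarith [pow_nonneg (le_trans zero_le_one hz) n])
    have h4 : (‖((hu.unit⁻¹ : (H →L[ℂ] H)ˣ) : H →L[ℂ] H)‖⁻¹) ^ 2 * ‖c‖ ^ 2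
        ≤ 2 * ((BR μ n + 1) * ‖z0‖ ^ n) * ‖z0‖ * ‖c‖ * ‖phiR μ.mom n z0 c‖ := by
      calc (‖((hu.unit⁻¹ : (H →L[ℂ] H)ˣ) : H →L[ℂ] H)‖⁻¹) ^ 2 * ‖c‖ ^ 2
          ≤ (@inner ℂ H _ (kappaR μ.mom n c) c).re := h1
        _ ≤ 2 * ‖z0‖ * ‖μ.Rip (fun _ => 1) (gR μ n z0)‖ * ‖c‖ * ‖phiR μ.mom n z0 c‖ := h2
        _ ≤ 2 * ((BR μ n + 1) * ‖z0‖ ^ n) * ‖z0‖ * ‖c‖ * ‖phiR μ.mom n z0 c‖ := by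
            have hz0 : (0:ℝ) ≤ ‖z0‖ := norm_nonneg _
            have := mul_le_mul_of_nonneg_left h3 (by positivity : (0:ℝ) ≤ 2 * ‖z0‖)
            nlinarith [norm_nonneg c, norm_nonneg (phiR μ.mom n z0 c),
              mul_nonneg (norm_nonneg c) (norm_nonneg (phiR μ.mom n z0 c))]
    have h5 : 2 * ((BR μ n + 1) * ‖z0‖ ^ n) * ‖z0‖ = 2 * (BR μ n + 1) * ‖z0‖ ^ (n + 1) := by
      rw [pow_succ]
      ring
    rw [h5] at h4
    apply (mul_le_mul_iff_of_pos_right hcpos).1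
    nlinarith [h4]

end Part3e
section Part3f

variable {H : Type*} [NormedAddCommGroup H] [InnerProductSpace ℂ H] [CompleteSpace H]

lemma phiR_eq2 (μ : OpMeasure H) (n : ℕ) :
    phiR μ.mom n
      = fun z => z ^ n • (1 : H →L[ℂ] H) - ∑ k ∈ Finset.range n, z ^ k • bR μ n k := by
  funext z
  rw [phiR]
  congr 1
  rw [← Fin.sum_univ_eq_sum_range (fun j => z ^ j • bR μ n j) n]
  refine Finset.sum_congr rfl fun k _ => ?_
  have : bR μ n (k : ℕ) = phiRcoef μ.mom n k := by simp [bR, k.isLt]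
  rw [this]

/-- The reversed right polynomial (with un-adjointed coefficients). -/
def FR (μ : OpMeasure H) (n : ℕ) : ℂ → H →L[ℂ] H :=
  fun u => (1 : H →L[ℂ] H) - ∑ k ∈ Finset.range n, u ^ (n - k) • bR μ n k

lemma FR_cont (μ : OpMeasure H) (n : ℕ) : Continuous (FR μ n) := by
  apply Continuous.sub continuous_const
  apply continuous_finset_sum
  intro k _
  exact ((continuous_pow _).smul continuous_const)

lemma FR_zero (μ : OpMeasure H) (n : ℕ) (hn : 0 < n) : FR μ n 0 = 1 := by
  rw [FR]
  have : ∑ k ∈ Finset.range n, (0 : ℂ) ^ (n - k) • bR μ n k = 0 := by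
    refine Finset.sum_eq_zero fun k hk => ?_
    have : n - k ≠ 0 := by
      have := Finset.mem_range.1 hk; omega
    rw [zero_pow this, zero_smul]
  rw [this, sub_zero]

lemma FR_eq (μ : OpMeasure H) (n : ℕ) (u : ℂ) (hu : u ≠ 0) :
    FR μ n u = u ^ n • phiR μ.mom n u⁻¹ := by
  rw [FR, phiR_eq2]
  rw [smul_sub, smul_smul, Finset.smul_sum]
  congr 1
  · rw [← mul_pow, mul_inv_cancel₀ hu, one_pow, one_smul]
  · refine Finset.sum_congr rfl fun k hk => ?_
    rw [smul_smul]
    congr 1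
    rw [inv_pow, pow_sub₀ u hu (le_of_lt (Finset.mem_range.1 hk))]

lemma smul_unit (z : ℂ) (hz : z ≠ 0) (W : H →L[ℂ] H) (hW : IsUnit W) (k : ℕ) :
    IsUnit (z ^ k • W) := by
  have h1 : IsUnit ((z ^ k) • (1 : H →L[ℂ] H)) := by
    refine ⟨⟨(z ^ k) • 1, (z ^ k)⁻¹ • 1, ?_, ?_⟩, rfl⟩
    · rw [smul_mul_smul_comm, mul_inv_cancel₀ (pow_ne_zero k hz), one_mul, one_smul]
    · rw [smul_mul_smul_comm, inv_mul_cancel₀ (pow_ne_zero k hz), one_mul, one_smul]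
  have h2 : z ^ k • W = ((z ^ k) • (1 : H →L[ℂ] H)) * W := by
    rw [smul_mul_assoc, one_mul]
  rw [h2]
  exact h1.mul hW

/-- Main right-case conclusion: `Φ_n^R` is invertible on the unit circle. -/
lemma phiR_unit_on_circle (μ : OpMeasure H) (n : ℕ) (hTR : IsUnit (TmatR μ.mom n))
    (s : H →L[ℂ] H) (hpos : s.IsPositive) (hss : s * s = kappaR μ.mom n) (hu : IsUnit s)
    (hδ : 0 < (‖((hu.unit⁻¹ : (H →L[ℂ] H)ˣ) : H →L[ℂ] H)‖⁻¹) ^ 2) :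
    ∀ z : ℂ, ‖z‖ = 1 → IsUnit (phiR μ.mom n z) := by
  intro z hz
  rcases Nat.eq_zero_or_pos n with rfl | hn
  · have : phiR μ.mom 0 z = 1 := by rw [phiR]; simp
    rw [this]; exact isUnit_one
  set δ : ℝ := (‖((hu.unit⁻¹ : (H →L[ℂ] H)ˣ) : H →L[ℂ] H)‖⁻¹) ^ 2 with hδdef
  set C : ℝ := 2 * (BR μ n + 1) with hCdef
  have hC : 0 < C := by
    rw [hCdef]; nlinarith [BR_nonneg μ n]
  have hFunit : ∀ u : ℂ, ‖u‖ ≤ 1 → IsUnit (FR μ n u) := by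
    apply unit_on_disk (FR_cont μ n) (by rw [FR_zero μ n hn]; exact isUnit_one)
      (δ / C) (by positivity) (2 * n + 1)
    intro u hu1 c
    rcases eq_or_ne u 0 with rfl | hu0
    · rw [norm_zero, zero_pow (by omega), mul_zero, zero_mul]
      exact norm_nonneg _
    · have hupos : 0 < ‖u‖ := norm_pos_iff.2 hu0
      have hinv : 1 ≤ ‖u⁻¹‖ := by
        rw [norm_inv]
        rw [le_inv_comm₀] <;> [skip; norm_num; exact hupos]
        simpa using hu1
      have hlow := phiR_low μ n hTR hn s hpos hss hu u⁻¹ hinv c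
      rw [← hδdef, ← hCdef] at hlow
      have hF : ‖FR μ n u c‖ = ‖u‖ ^ n * ‖phiR μ.mom n u⁻¹ c‖ := by
        rw [FR_eq μ n u hu0]
        rw [ContinuousLinearMap.smul_apply, norm_smul, norm_pow]
      rw [hF]
      -- from hlow : δ * ‖c‖ ≤ C * ‖u⁻¹‖ ^ (n+1) * X
      set X : ℝ := ‖phiR μ.mom n u⁻¹ c‖ with hX
      have hXnn : 0 ≤ X := norm_nonneg _
      have hiu : ‖u⁻¹‖ = ‖u‖⁻¹ := norm_inv u
      rw [hiu] at hlow
      have hpow : ‖u‖⁻¹ ^ (n + 1) * ‖u‖ ^ (n + 1) = 1 := by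
        rw [← mul_pow, inv_mul_cancel₀ (ne_of_gt hupos), one_pow]
      -- multiply hlow by ‖u‖^(n+1)
      have h6 : δ * ‖c‖ * ‖u‖ ^ (n + 1) ≤ C * X := by
        have := mul_le_mul_of_nonneg_right hlow (pow_nonneg (le_of_lt hupos) (n + 1))
        calc δ * ‖c‖ * ‖u‖ ^ (n + 1)
            ≤ C * ‖u‖⁻¹ ^ (n + 1) * X * ‖u‖ ^ (n + 1) := this
          _ = C * X * (‖u‖⁻¹ ^ (n + 1) * ‖u‖ ^ (n + 1)) := by ring
          _ = C * X := by rw [hpow, mul_one]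
      rw [div_mul_eq_mul_div, div_mul_eq_mul_div, div_le_iff₀ hC]
      calc δ * ‖u‖ ^ (2 * n + 1) * ‖c‖
          = (δ * ‖c‖ * ‖u‖ ^ (n + 1)) * ‖u‖ ^ n := by ring
        _ ≤ C * X * ‖u‖ ^ n := by
            apply mul_le_mul_of_nonneg_right h6 (pow_nonneg (le_of_lt hupos) n)
        _ = ‖u‖ ^ n * X * C := by ring
  -- now conclude on the circle
  have hz0 : z ≠ 0 := by
    intro h; rw [h] at hz; simp at hz
  have hFz : FR μ n z⁻¹ = (z⁻¹) ^ n • phiR μ.mom n z := by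
    have := FR_eq μ n z⁻¹ (inv_ne_zero hz0)
    rwa [inv_inv] at this
  have hphi : phiR μ.mom n z = z ^ n • FR μ n z⁻¹ := by
    rw [hFz, smul_smul, ← mul_pow, mul_inv_cancel₀ hz0, one_pow, one_smul]
  rw [hphi]
  apply smul_unit z hz0 _ _ n
  apply hFunit
  rw [norm_inv, hz]
  norm_num

end Part3f
section Part4a

variable {H : Type*} [NormedAddCommGroup H] [InnerProductSpace ℂ H] [CompleteSpace H]

/-- lower coefficients of the monic left polynomial, as a function on `ℕ`. -/
def bL (μ : OpMeasure H) (n : ℕ) : ℕ → H →L[ℂ] H :=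
  fun k => if h : k < n then phiLcoef μ.mom n ⟨k, h⟩ else 0

/-- all coefficients of the monic left polynomial. -/
def CL (μ : OpMeasure H) (n : ℕ) : ℕ → H →L[ℂ] H :=
  fun j => if j = n then 1 else -(bL μ n j)

lemma phiL_eq (μ : OpMeasure H) (n : ℕ) :
    phiL μ.mom n = fun z => ∑ j ∈ Finset.range (n + 1), z ^ j • CL μ n j := by
  funext z
  rw [phiL, Finset.sum_range_succ]
  have h1 : CL μ n n = 1 := by simp [CL]
  have h2 : ∑ j ∈ Finset.range n, z ^ j • CL μ n j
      = -∑ j ∈ Finset.range n, z ^ j • bL μ n j := by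
    rw [← Finset.sum_neg_distrib]
    refine Finset.sum_congr rfl fun j hj => ?_
    have : j ≠ n := Nat.ne_of_lt (Finset.mem_range.1 hj)
    simp [CL, this]
  have h3 : ∑ k : Fin n, z ^ (k : ℕ) • phiLcoef μ.mom n k
      = ∑ j ∈ Finset.range n, z ^ j • bL μ n j := by
    rw [← Fin.sum_univ_eq_sum_range (fun j => z ^ j • bL μ n j) n]
    refine Finset.sum_congr rfl fun k _ => ?_
    have : bL μ n (k : ℕ) = phiLcoef μ.mom n k := by simp [bL, k.isLt]
    rw [this]
  rw [h1, h2, h3]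
  abel

lemma phiL_eq2 (μ : OpMeasure H) (n : ℕ) :
    phiL μ.mom n
      = fun z => z ^ n • (1 : H →L[ℂ] H) - ∑ k ∈ Finset.range n, z ^ k • bL μ n k := by
  funext z
  rw [phiL]
  congr 1
  rw [← Fin.sum_univ_eq_sum_range (fun j => z ^ j • bL μ n j) n]
  refine Finset.sum_congr rfl fun k _ => ?_
  have : bL μ n (k : ℕ) = phiLcoef μ.mom n k := by simp [bL, k.isLt]
  rw [this]

lemma Lip_mono_phiL (μ : OpMeasure H) (n : ℕ) (hTL : IsUnit (TmatL μ.mom n))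
    (k : ℕ) (hk : k < n) :
    μ.Lip (fun z => z ^ k • (1 : H →L[ℂ] H)) (phiL μ.mom n) = 0 := by
  rw [phiL_eq]
  have h1 : μ.Lip (fun z => z ^ k • (1 : H →L[ℂ] H))
      (fun z => ∑ j ∈ Finset.range (n + 1), z ^ j • CL μ n j)
      = ∑ j ∈ Finset.range (n + 1),
          CL μ n j * μ.mom ((k : ℤ) - (j : ℤ)) * adjoint (1 : H →L[ℂ] H) := by
    rw [Lip_sum_right]
    exact Finset.sum_congr rfl fun j _ => Lip_mono' μ k j 1 (CL μ n j)
  rw [h1]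
  have hadj1 : adjoint (1 : H →L[ℂ] H) = 1 := by rw [← star_eq_adjoint, star_one]
  simp only [hadj1, mul_one]
  rw [Finset.sum_range_succ]
  have h2 : ∑ j ∈ Finset.range n, CL μ n j * μ.mom ((k : ℤ) - (j : ℤ))
      = -∑ j ∈ Finset.range n, bL μ n j * μ.mom ((k : ℤ) - (j : ℤ)) := by
    rw [← Finset.sum_neg_distrib]
    refine Finset.sum_congr rfl fun j hj => ?_
    have : j ≠ n := Nat.ne_of_lt (Finset.mem_range.1 hj)
    simp [CL, this]
  have h3 : CL μ n n = 1 := by simp [CL]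
  rw [h2, h3, one_mul]
  have h4 : ∑ j ∈ Finset.range n, bL μ n j * μ.mom ((k : ℤ) - (j : ℤ))
      = Matrix.vecMul (phiLcoef μ.mom n) (TmatL μ.mom n) ⟨k, hk⟩ := by
    rw [Matrix.vecMul, dotProduct]
    rw [← Fin.sum_univ_eq_sum_range (fun j => bL μ n j * μ.mom ((k : ℤ) - (j : ℤ))) n]
    refine Finset.sum_congr rfl fun j _ => ?_
    have : bL μ n (j : ℕ) = phiLcoef μ.mom n j := by simp [bL, j.isLt]
    rw [this, TmatL]
  have h5 : Matrix.vecMul (phiLcoef μ.mom n) (TmatL μ.mom n) = nuR μ.mom n := by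
    rw [phiLcoef, Matrix.vecMul_vecMul, Ring.inverse_mul_cancel _ hTL, Matrix.vecMul_one]
  rw [h4, h5, nuR]
  simp

lemma Lip_op_phiL (μ : OpMeasure H) (n : ℕ) (hTL : IsUnit (TmatL μ.mom n))
    (k : ℕ) (hk : k < n) (a : H →L[ℂ] H) :
    μ.Lip (fun z => z ^ k • a) (phiL μ.mom n) = 0 := by
  have h1 : (fun z : ℂ => z ^ k • a) = fun z => a * (z ^ k • (1 : H →L[ℂ] H)) := by
    funext z; rw [mul_smul_comm, mul_one]
  rw [h1, μ.Lip_op_left a _ _, Lip_mono_phiL μ n hTL k hk, zero_mul]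

lemma Lip_lowpoly_phiL (μ : OpMeasure H) (n : ℕ) (hTL : IsUnit (TmatL μ.mom n))
    (N : ℕ) (hN : N ≤ n) (d : ℕ → H →L[ℂ] H) :
    μ.Lip (fun z => ∑ i ∈ Finset.range N, z ^ i • d i) (phiL μ.mom n) = 0 := by
  rw [Lip_sum_left]
  refine Finset.sum_eq_zero fun i hi => ?_
  exact Lip_op_phiL μ n hTL i (lt_of_lt_of_le (Finset.mem_range.1 hi) hN) (d i)

lemma Lip_phiL_lowpoly (μ : OpMeasure H) (n : ℕ) (hTL : IsUnit (TmatL μ.mom n))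
    (N : ℕ) (hN : N ≤ n) (d : ℕ → H →L[ℂ] H) :
    μ.Lip (phiL μ.mom n) (fun z => ∑ i ∈ Finset.range N, z ^ i • d i) = 0 := by
  have := μ.Lip_adjoint (fun z => ∑ i ∈ Finset.range N, z ^ i • d i) (phiL μ.mom n)
  rw [Lip_lowpoly_phiL μ n hTL N hN d] at this
  rw [← this, ← star_eq_adjoint, star_zero]

lemma Lip_zn_phiL (μ : OpMeasure H) (n : ℕ) (hTL : IsUnit (TmatL μ.mom n)) :
    μ.Lip (fun z => z ^ n • (1 : H →L[ℂ] H)) (phiL μ.mom n) = kappaL μ.mom n := by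
  rw [phiL_eq]
  have h1 : μ.Lip (fun z => z ^ n • (1 : H →L[ℂ] H))
      (fun z => ∑ j ∈ Finset.range (n + 1), z ^ j • CL μ n j)
      = ∑ j ∈ Finset.range (n + 1),
          CL μ n j * μ.mom ((n : ℤ) - (j : ℤ)) * adjoint (1 : H →L[ℂ] H) := by
    rw [Lip_sum_right]
    exact Finset.sum_congr rfl fun j _ => Lip_mono' μ n j 1 (CL μ n j)
  rw [h1]
  have hadj1 : adjoint (1 : H →L[ℂ] H) = 1 := by rw [← star_eq_adjoint, star_one]
  simp only [hadj1, mul_one]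
  rw [Finset.sum_range_succ]
  have h3 : CL μ n n = 1 := by simp [CL]
  rw [h3, one_mul, sub_self]
  have h2 : ∑ j ∈ Finset.range n, CL μ n j * μ.mom ((n : ℤ) - (j : ℤ))
      = -∑ j ∈ Finset.range n, bL μ n j * μ.mom ((n : ℤ) - (j : ℤ)) := by
    rw [← Finset.sum_neg_distrib]
    refine Finset.sum_congr rfl fun j hj => ?_
    have : j ≠ n := Nat.ne_of_lt (Finset.mem_range.1 hj)
    simp [CL, this]
  rw [h2, kappaL]
  have h4 : ∑ j ∈ Finset.range n, bL μ n j * μ.mom ((n : ℤ) - (j : ℤ))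
      = ∑ k : Fin n,
          adjoint (xiL μ.mom n k) * ((Ring.inverse (TmatL μ.mom n)).mulVec (xiL μ.mom n) k) := by
    rw [← Fin.sum_univ_eq_sum_range (fun j => bL μ n j * μ.mom ((n : ℤ) - (j : ℤ))) n]
    have ha : ∀ k : Fin n, adjoint (xiL μ.mom n k) = nuR μ.mom n k := by
      intro k
      rw [xiL, nuR, ← μ.mom_neg ((n : ℤ) - (k : ℤ))]
      congr 1; ring
    have hb : ∀ j : Fin n, bL μ n (j : ℕ) * μ.mom ((n : ℤ) - ((j : ℕ) : ℤ))
        = ∑ l : Fin n, nuR μ.mom n l * Ring.inverse (TmatL μ.mom n) l j * xiL μ.mom n j := by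
      intro j
      have hbj : bL μ n (j : ℕ) = phiLcoef μ.mom n j := by simp [bL, j.isLt]
      have hx : μ.mom ((n : ℤ) - ((j : ℕ) : ℤ)) = xiL μ.mom n j := by rw [xiL]
      rw [hbj, hx, phiLcoef, Matrix.vecMul, dotProduct, Finset.sum_mul]
    have hc : ∀ k : Fin n,
        adjoint (xiL μ.mom n k) * ((Ring.inverse (TmatL μ.mom n)).mulVec (xiL μ.mom n) k)
          = ∑ l : Fin n, nuR μ.mom n k * Ring.inverse (TmatL μ.mom n) k l * xiL μ.mom n l := by
      intro k
      rw [ha k, Matrix.mulVec, dotProduct, Finset.mul_sum]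
      exact Finset.sum_congr rfl fun l _ => by rw [mul_assoc]
    calc ∑ j : Fin n, bL μ n (j : ℕ) * μ.mom ((n : ℤ) - ((j : ℕ) : ℤ))
        = ∑ j : Fin n, ∑ l : Fin n,
            nuR μ.mom n l * Ring.inverse (TmatL μ.mom n) l j * xiL μ.mom n j :=
          Finset.sum_congr rfl fun j _ => hb j
      _ = ∑ l : Fin n, ∑ j : Fin n,
            nuR μ.mom n l * Ring.inverse (TmatL μ.mom n) l j * xiL μ.mom n j :=
          Finset.sum_comm
      _ = ∑ k : Fin n,
            adjoint (xiL μ.mom n k) * ((Ring.inverse (TmatL μ.mom n)).mulVec (xiL μ.mom n) k) :=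
          Finset.sum_congr rfl fun k _ => (hc k).symm
  rw [h4]
  abel

lemma Lip_phiL_phiL (μ : OpMeasure H) (n : ℕ) (hTL : IsUnit (TmatL μ.mom n)) :
    μ.Lip (phiL μ.mom n) (phiL μ.mom n) = kappaL μ.mom n := by
  have step : μ.Lip (phiL μ.mom n) (phiL μ.mom n)
      = μ.Lip (fun z => ∑ j ∈ Finset.range (n + 1), z ^ j • CL μ n j) (phiL μ.mom n) := by
    rw [phiL_eq]
  rw [step, Lip_sum_left]
  have key : ∀ j ∈ Finset.range (n + 1),
      μ.Lip (fun z => z ^ j • CL μ n j) (phiL μ.mom n)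
        = if j = n then kappaL μ.mom n else 0 := by
    intro j hj
    rcases Nat.lt_or_ge j n with h | h
    · rw [if_neg (Nat.ne_of_lt h)]
      exact Lip_op_phiL μ n hTL j h _
    · have hjn : j = n := le_antisymm (Nat.lt_succ_iff.1 (Finset.mem_range.1 hj)) h
      rw [if_pos hjn]
      rw [show (fun z : ℂ => z ^ j • CL μ n j) = fun z => z ^ n • (1 : H →L[ℂ] H) from by
        rw [hjn]; simp [CL]]
      exact Lip_zn_phiL μ n hTL
  rw [Finset.sum_congr rfl key]
  rw [Finset.sum_ite_eq' (Finset.range (n+1)) n (fun _ => kappaL μ.mom n)]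
  rw [if_pos (Finset.self_mem_range_succ n)]

end Part4a
section Part4b

variable {H : Type*} [NormedAddCommGroup H] [InnerProductSpace ℂ H] [CompleteSpace H]

def gcL (μ : OpMeasure H) (n : ℕ) (z0 : ℂ) : ℕ → H →L[ℂ] H :=
  fun i => ∑ j ∈ Finset.range (n + 1), (if i < j then z0 ^ (j - 1 - i) else 0) • CL μ n j

def gL (μ : OpMeasure H) (n : ℕ) (z0 : ℂ) : ℂ → H →L[ℂ] H :=
  fun w => ∑ i ∈ Finset.range n, w ^ i • gcL μ n z0 i

lemma gL_def (μ : OpMeasure H) (n : ℕ) (z0 : ℂ) :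
    gL μ n z0 = fun w => ∑ i ∈ Finset.range n, w ^ i • gcL μ n z0 i := rfl

lemma factL (μ : OpMeasure H) (n : ℕ) (z0 : ℂ) (w : ℂ) :
    phiL μ.mom n w = (w - z0) • gL μ n z0 w + phiL μ.mom n z0 := by
  have key : (w - z0) • gL μ n z0 w
      = ∑ j ∈ Finset.range (n + 1), (w ^ j - z0 ^ j) • CL μ n j := by
    have e1 : gL μ n z0 w
        = ∑ i ∈ Finset.range n, ∑ j ∈ Finset.range (n + 1),
            (w ^ i * (if i < j then z0 ^ (j - 1 - i) else 0)) • CL μ n j := by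
      rw [gL]
      refine Finset.sum_congr rfl fun i _ => ?_
      rw [gcL, Finset.smul_sum]
      refine Finset.sum_congr rfl fun j _ => ?_
      rw [smul_smul]
    rw [e1, Finset.sum_comm, Finset.smul_sum]
    refine Finset.sum_congr rfl fun j hj => ?_
    have hjn : j ≤ n := Nat.lt_succ_iff.1 (Finset.mem_range.1 hj)
    have e2 : ∑ i ∈ Finset.range n, (w ^ i * (if i < j then z0 ^ (j - 1 - i) else 0)) • CL μ n j
        = (∑ i ∈ Finset.range n, w ^ i * (if i < j then z0 ^ (j - 1 - i) else 0)) • CL μ n j := by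
      rw [Finset.sum_smul]
    rw [e2, smul_smul]
    congr 1
    have e3 : ∑ i ∈ Finset.range n, w ^ i * (if i < j then z0 ^ (j - 1 - i) else 0)
        = ∑ i ∈ Finset.range j, w ^ i * z0 ^ (j - 1 - i) := by
      rw [← Finset.sum_subset (Finset.range_subset_range.2 hjn)]
      · refine Finset.sum_congr rfl fun i hi => ?_
        rw [if_pos (Finset.mem_range.1 hi)]
      · intro i _ hi
        rw [if_neg (by simpa using hi), mul_zero]
    rw [e3, mul_comm, geom_sum₂_mul]
  have e4 : (∑ j ∈ Finset.range (n + 1), w ^ j • CL μ n j)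
      = ∑ j ∈ Finset.range (n + 1), (w ^ j - z0 ^ j) • CL μ n j
        + ∑ j ∈ Finset.range (n + 1), z0 ^ j • CL μ n j := by
    rw [← Finset.sum_add_distrib]
    refine Finset.sum_congr rfl fun j _ => ?_
    rw [← add_smul, sub_add_cancel]
  simp only [phiL_eq]
  rw [key, e4]

set_option maxHeartbeats 1000000 in
lemma identL (μ : OpMeasure H) (n : ℕ) (hTL : IsUnit (TmatL μ.mom n)) (hn : 0 < n) (z0 : ℂ) :
    kappaL μ.mom n
      = ((1 : ℂ) - z0 * (starRingEnd ℂ) z0) • μ.Lip (gL μ n z0) (gL μ n z0)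
        + z0 • (μ.Lip (fun _ => 1) (gL μ n z0) * adjoint (phiL μ.mom n z0))
        + (starRingEnd ℂ) z0 • (phiL μ.mom n z0 * adjoint (μ.Lip (fun _ => 1) (gL μ n z0)))
        - phiL μ.mom n z0 * μ.mom 0 * adjoint (phiL μ.mom n z0) := by
  set Φ : ℂ → H →L[ℂ] H := phiL μ.mom n with hΦdef
  set g : ℂ → H →L[ℂ] H := gL μ n z0 with hgdef
  set K : H →L[ℂ] H := phiL μ.mom n z0 with hKdef
  set m : H →L[ℂ] H := μ.Lip (fun _ => 1) g with hmdef
  set G : H →L[ℂ] H := μ.Lip g g with hGdef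
  set h : ℂ → H →L[ℂ] H := fun w => w • g w with hhdef
  set v : ℂ → H →L[ℂ] H := fun w => K - z0 • g w with hvdef
  have hconstK : (fun _ : ℂ => K) = fun z : ℂ => K * (fun _ : ℂ => (1 : H →L[ℂ] H)) z := by
    funext z; simp
  have hpt : ∀ w, Φ w = h w + v w := by
    intro w
    rw [hhdef, hvdef, hΦdef]
    have := factL μ n z0 w
    rw [hgdef.symm] at this
    rw [this, hKdef, sub_smul]
    abel
  have hgΦ : μ.Lip g Φ = 0 := by
    rw [hgdef, hΦdef, gL_def]
    exact Lip_lowpoly_phiL μ n hTL n le_rfl (gcL μ n z0)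
  have hΦg : μ.Lip Φ g = 0 := by
    rw [hgdef, hΦdef, gL_def]
    exact Lip_phiL_lowpoly μ n hTL n le_rfl (gcL μ n z0)
  have hcΦ : μ.Lip (fun _ => K) Φ = 0 := by
    have e : (fun _ : ℂ => K) = fun z : ℂ => ∑ i ∈ Finset.range 1, z ^ i • (fun _ : ℕ => K) i := by
      funext z; simp
    rw [e, hΦdef]
    exact Lip_lowpoly_phiL μ n hTL 1 hn (fun _ => K)
  have hΦc : μ.Lip Φ (fun _ => K) = 0 := by
    have e : (fun _ : ℂ => K) = fun z : ℂ => ∑ i ∈ Finset.range 1, z ^ i • (fun _ : ℕ => K) i := by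
      funext z; simp
    rw [e, hΦdef]
    exact Lip_phiL_lowpoly μ n hTL 1 hn (fun _ => K)
  have hgone : μ.Lip g (fun _ => 1) = adjoint m := by
    rw [hmdef, ← μ.Lip_adjoint]
  have hcc : μ.Lip (fun _ => K) (fun _ => K) = K * μ.mom 0 * adjoint K := by
    have e : (fun _ : ℂ => K) = fun z : ℂ => z ^ 0 • K := by funext z; simp
    rw [e]
    simpa using Lip_mono' μ 0 0 K K
  have hcg : μ.Lip (fun _ => K) g = m * adjoint K := by
    rw [hconstK, μ.Lip_op_left K _ g, hmdef]
  have hgc : μ.Lip g (fun _ => K) = K * adjoint m := by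
    rw [hconstK, μ.Lip_op_right K g _, hgone]
  have hhh : μ.Lip h h = G := by
    have e : h = fun w => ∑ i ∈ Finset.range n, w ^ (i + 1) • gcL μ n z0 i := by
      funext w
      rw [hhdef, hgdef, gL_def]
      simp only [Finset.smul_sum, smul_smul]
      exact Finset.sum_congr rfl fun i _ => by rw [← pow_succ']
    rw [e, hGdef, hgdef, gL_def]
    exact Lip_shift μ n (gcL μ n z0) (gcL μ n z0)
  have hgv : μ.Lip g v = K * adjoint m - z0 • G := by
    rw [hvdef]
    rw [Lip_sub_right μ g (fun _ => K) (fun w => z0 • g w)]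
    rw [hgc, μ.Lip_smul_right z0 g g, hGdef]
  have hcv : μ.Lip (fun _ => K) v = K * μ.mom 0 * adjoint K - z0 • (m * adjoint K) := by
    rw [hvdef]
    rw [Lip_sub_right μ (fun _ => K) (fun _ => K) (fun w => z0 • g w)]
    rw [hcc, μ.Lip_smul_right z0 _ g, hcg]
  have hvg : μ.Lip v g = m * adjoint K - (starRingEnd ℂ) z0 • G := by
    rw [hvdef]
    rw [Lip_sub_left μ (fun _ => K) (fun w => z0 • g w) g]
    rw [hcg, μ.Lip_smul_left z0 g g, hGdef]
  have hvc : μ.Lip v (fun _ => K)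
      = K * μ.mom 0 * adjoint K - (starRingEnd ℂ) z0 • (K * adjoint m) := by
    rw [hvdef]
    rw [Lip_sub_left μ (fun _ => K) (fun w => z0 • g w) (fun _ => K)]
    rw [hcc, μ.Lip_smul_left z0 g (fun _ => K), hgc]
  have hhfun : ∀ (f : ℂ → H →L[ℂ] H), μ.Lip h f = μ.Lip Φ f - μ.Lip v f := by
    intro f
    have h2 := Lip_add_left' μ h v f
    rw [show (fun z => h z + v z) = Φ from (funext hpt).symm] at h2
    rw [h2]; abel
  have hhg : μ.Lip h g = (starRingEnd ℂ) z0 • G - m * adjoint K := by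
    rw [hhfun g, hΦg, hvg]; abel
  have hhc : μ.Lip h (fun _ => K)
      = (starRingEnd ℂ) z0 • (K * adjoint m) - K * μ.mom 0 * adjoint K := by
    rw [hhfun (fun _ => K), hΦc, hvc]; abel
  have hvfun : ∀ (f : ℂ → H →L[ℂ] H), μ.Lip f h = μ.Lip f Φ - μ.Lip f v := by
    intro f
    have := Lip_add_right' μ f h v
    rw [show (fun z => h z + v z) = Φ from (funext hpt).symm] at this
    rw [this]; abel
  have hgh : μ.Lip g h = z0 • G - K * adjoint m := by
    rw [hvfun g, hgΦ, hgv]; abel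
  have hch : μ.Lip (fun _ => K) h = z0 • (m * adjoint K) - K * μ.mom 0 * adjoint K := by
    rw [hvfun (fun _ => K), hcΦ, hcv]; abel
  have hvh : μ.Lip v h
      = (z0 • (m * adjoint K) - K * μ.mom 0 * adjoint K)
        - (starRingEnd ℂ) z0 • (z0 • G - K * adjoint m) := by
    rw [hvdef]
    rw [Lip_sub_left μ (fun _ => K) (fun w => z0 • g w) h]
    rw [hch, μ.Lip_smul_left z0 g h, hgh]
  have hvv : μ.Lip v v
      = (K * μ.mom 0 * adjoint K - z0 • (m * adjoint K))
        - (starRingEnd ℂ) z0 • (K * adjoint m - z0 • G) := by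
    rw [hvdef]
    rw [Lip_sub_left μ (fun _ => K) (fun w => z0 • g w) v]
    rw [hcv, μ.Lip_smul_left z0 g v, hgv]
  have hhv : μ.Lip h v
      = ((starRingEnd ℂ) z0 • (K * adjoint m) - K * μ.mom 0 * adjoint K)
        - z0 • ((starRingEnd ℂ) z0 • G - m * adjoint K) := by
    rw [hvdef]
    rw [Lip_sub_right μ h (fun _ => K) (fun w => z0 • g w)]
    rw [hhc, μ.Lip_smul_right z0 h g, hhg]
  have hsplit : μ.Lip Φ Φ = μ.Lip h h + μ.Lip h v + (μ.Lip v h + μ.Lip v v) := by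
    have e : Φ = fun w => h w + v w := funext hpt
    conv_lhs => rw [e]
    rw [Lip_add_left' μ h v (fun w => h w + v w),
      Lip_add_right' μ h h v, Lip_add_right' μ v h v]
  have hκ : μ.Lip Φ Φ = kappaL μ.mom n := by rw [hΦdef]; exact Lip_phiL_phiL μ n hTL
  rw [← hκ, hsplit, hhh, hhv, hvh, hvv]
  module

end Part4b
section Part4c

variable {H : Type*} [NormedAddCommGroup H] [InnerProductSpace ℂ H] [CompleteSpace H]

lemma crossL (μ : OpMeasure H) (n : ℕ) (hTL : IsUnit (TmatL μ.mom n)) (hn : 0 < n)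
    (z0 : ℂ) (hz : 1 ≤ ‖z0‖) (c : H) :
    (@inner ℂ H _ (kappaL μ.mom n c) c).re
      ≤ 2 * ‖z0‖ * ‖μ.Lip (fun _ => 1) (gL μ n z0)‖ * ‖c‖
          * ‖adjoint (phiL μ.mom n z0) c‖ := by
  set K : H →L[ℂ] H := phiL μ.mom n z0 with hK
  set m : H →L[ℂ] H := μ.Lip (fun _ => 1) (gL μ n z0) with hm
  set G : H →L[ℂ] H := μ.Lip (gL μ n z0) (gL μ n z0) with hG
  have hid := identL μ n hTL hn z0
  rw [← hK, ← hm, ← hG] at hid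
  rw [hid]
  simp only [ContinuousLinearMap.add_apply, ContinuousLinearMap.sub_apply,
    ContinuousLinearMap.smul_apply, ContinuousLinearMap.mul_apply]
  rw [inner_sub_left, inner_add_left, inner_add_left]
  rw [inner_smul_left, inner_smul_left, inner_smul_left]
  rw [Complex.sub_re, Complex.add_re, Complex.add_re]
  have hreal : (starRingEnd ℂ) ((1 : ℂ) - z0 * (starRingEnd ℂ) z0)
      = (((1 : ℝ) - ‖z0‖ ^ 2 : ℝ) : ℂ) := by
    have h5 : Complex.normSq z0 = ‖z0‖ ^ 2 := by
      rw [Complex.normSq_eq_norm_sq]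
    rw [Complex.mul_conj, map_sub, map_one, Complex.conj_ofReal, h5]
    push_cast
    ring
  have ht1 : ((starRingEnd ℂ) ((1 : ℂ) - z0 * (starRingEnd ℂ) z0)
      * @inner ℂ H _ (G c) c).re ≤ 0 := by
    rw [hreal, Complex.re_ofReal_mul]
    apply mul_nonpos_of_nonpos_of_nonneg
    · nlinarith [hz, norm_nonneg z0]
    · exact Lip_pos_re μ (gL μ n z0) c
  have ht4 : 0 ≤ (@inner ℂ H _ (K (μ.mom 0 (adjoint K c))) c).re := by
    rw [← adjoint_inner_right]
    exact mom0_pos_re μ (adjoint K c)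
  have h2 : @inner ℂ H _ (m (adjoint K c)) c
      = @inner ℂ H _ (adjoint K c) (adjoint m c) := (adjoint_inner_right m (adjoint K c) c).symm
  have h3 : @inner ℂ H _ (K (adjoint m c)) c
      = @inner ℂ H _ (adjoint m c) (adjoint K c) := (adjoint_inner_right K (adjoint m c) c).symm
  have hcross : ((starRingEnd ℂ) z0 * @inner ℂ H _ (m (adjoint K c)) c).re
      + ((starRingEnd ℂ) ((starRingEnd ℂ) z0) * @inner ℂ H _ (K (adjoint m c)) c).re
      ≤ 2 * ‖z0‖ * ‖m‖ * ‖c‖ * ‖adjoint K c‖ := by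
    rw [h2, h3, Complex.conj_conj]
    set t : ℂ := @inner ℂ H _ (adjoint K c) (adjoint m c) with htd
    have hconj : @inner ℂ H _ (adjoint m c) (adjoint K c) = (starRingEnd ℂ) t := by
      rw [htd]; exact (inner_conj_symm _ _).symm
    rw [hconj]
    have he : z0 * (starRingEnd ℂ) t = (starRingEnd ℂ) ((starRingEnd ℂ) z0 * t) := by
      rw [map_mul, Complex.conj_conj]
    rw [he, Complex.conj_re]
    have hre : ((starRingEnd ℂ) z0 * t).re ≤ ‖z0‖ * (‖m‖ * ‖c‖ * ‖adjoint K c‖) := by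
      calc ((starRingEnd ℂ) z0 * t).re ≤ ‖(starRingEnd ℂ) z0 * t‖ := by
            exact Complex.re_le_norm _
        _ = ‖z0‖ * ‖t‖ := by rw [norm_mul, RCLike.norm_conj]
        _ ≤ ‖z0‖ * (‖m‖ * ‖c‖ * ‖adjoint K c‖) := by
            apply mul_le_mul_of_nonneg_left _ (norm_nonneg z0)
            calc ‖t‖ ≤ ‖adjoint K c‖ * ‖adjoint m c‖ := by
                  rw [htd]; exact norm_inner_le_norm _ _
              _ ≤ ‖adjoint K c‖ * (‖m‖ * ‖c‖) := by
                  apply mul_le_mul_of_nonneg_left _ (norm_nonneg _)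
                  calc ‖adjoint m c‖ ≤ ‖adjoint m‖ * ‖c‖ := le_opNorm _ _
                    _ = ‖m‖ * ‖c‖ := by rw [adjoint.norm_map]
              _ = ‖m‖ * ‖c‖ * ‖adjoint K c‖ := by ring
    linarith
  linarith

/-- A `z0`-independent bound constant, left version. -/
def BL (μ : OpMeasure H) (n : ℕ) : ℝ :=
  (∑ i ∈ Finset.range n, ‖μ.mom (0 - (i : ℤ))‖) * (∑ j ∈ Finset.range (n + 1), ‖CL μ n j‖)

lemma BL_nonneg (μ : OpMeasure H) (n : ℕ) : 0 ≤ BL μ n := by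
  apply mul_nonneg <;> exact Finset.sum_nonneg fun _ _ => norm_nonneg _

lemma gcL_bound (μ : OpMeasure H) (n : ℕ) (z0 : ℂ) (hz : 1 ≤ ‖z0‖) (i : ℕ) :
    ‖gcL μ n z0 i‖ ≤ ‖z0‖ ^ n * ∑ j ∈ Finset.range (n + 1), ‖CL μ n j‖ := by
  rw [gcL]
  calc ‖∑ j ∈ Finset.range (n + 1), (if i < j then z0 ^ (j - 1 - i) else 0) • CL μ n j‖
      ≤ ∑ j ∈ Finset.range (n + 1), ‖(if i < j then z0 ^ (j - 1 - i) else 0) • CL μ n j‖ :=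
        norm_sum_le _ _
    _ ≤ ∑ j ∈ Finset.range (n + 1), ‖z0‖ ^ n * ‖CL μ n j‖ := by
        refine Finset.sum_le_sum fun j hj => ?_
        rw [norm_smul]
        apply mul_le_mul_of_nonneg_right _ (norm_nonneg _)
        split_ifs with hij
        · rw [norm_pow]
          apply pow_le_pow_right₀ hz
          have : j ≤ n := Nat.lt_succ_iff.1 (Finset.mem_range.1 hj)
          omega
        · rw [norm_zero]
          positivity
    _ = ‖z0‖ ^ n * ∑ j ∈ Finset.range (n + 1), ‖CL μ n j‖ := by
        rw [Finset.mul_sum]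

lemma mL_formula (μ : OpMeasure H) (n : ℕ) (z0 : ℂ) :
    μ.Lip (fun _ => 1) (gL μ n z0)
      = ∑ i ∈ Finset.range n, gcL μ n z0 i * μ.mom (0 - (i : ℤ)) := by
  have hone : (fun _ : ℂ => (1 : H →L[ℂ] H))
      = fun z : ℂ => ∑ k ∈ Finset.range 1, z ^ k • (fun _ : ℕ => (1 : H →L[ℂ] H)) k := by
    funext z; simp
  rw [hone, gL_def]
  rw [Lip_poly μ 1 n (fun _ => 1) (gcL μ n z0)]
  rw [Finset.sum_range_one]
  refine Finset.sum_congr rfl fun i _ => ?_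
  have hadj1 : adjoint (1 : H →L[ℂ] H) = 1 := by rw [← star_eq_adjoint, star_one]
  rw [hadj1, mul_one]
  norm_num

lemma mL_bound (μ : OpMeasure H) (n : ℕ) (z0 : ℂ) (hz : 1 ≤ ‖z0‖) :
    ‖μ.Lip (fun _ => 1) (gL μ n z0)‖ ≤ BL μ n * ‖z0‖ ^ n := by
  rw [mL_formula]
  calc ‖∑ i ∈ Finset.range n, gcL μ n z0 i * μ.mom (0 - (i : ℤ))‖
      ≤ ∑ i ∈ Finset.range n, ‖gcL μ n z0 i * μ.mom (0 - (i : ℤ))‖ := norm_sum_le _ _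
    _ ≤ ∑ i ∈ Finset.range n, ‖μ.mom (0 - (i : ℤ))‖
          * (‖z0‖ ^ n * ∑ j ∈ Finset.range (n + 1), ‖CL μ n j‖) := by
        refine Finset.sum_le_sum fun i _ => ?_
        calc ‖gcL μ n z0 i * μ.mom (0 - (i : ℤ))‖
            ≤ ‖gcL μ n z0 i‖ * ‖μ.mom (0 - (i : ℤ))‖ := norm_mul_le _ _
          _ = ‖μ.mom (0 - (i : ℤ))‖ * ‖gcL μ n z0 i‖ := by ring
          _ ≤ _ := mul_le_mul_of_nonneg_left (gcL_bound μ n z0 hz i) (norm_nonneg _)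
    _ = BL μ n * ‖z0‖ ^ n := by
        rw [← Finset.sum_mul, BL]
        ring

lemma phiL_low (μ : OpMeasure H) (n : ℕ) (hTL : IsUnit (TmatL μ.mom n)) (hn : 0 < n)
    (s : H →L[ℂ] H) (hpos : s.IsPositive) (hss : s * s = kappaL μ.mom n) (hu : IsUnit s)
    (z0 : ℂ) (hz : 1 ≤ ‖z0‖) (c : H) :
    (‖((hu.unit⁻¹ : (H →L[ℂ] H)ˣ) : H →L[ℂ] H)‖⁻¹) ^ 2 * ‖c‖
      ≤ 2 * (BL μ n + 1) * ‖z0‖ ^ (n + 1) * ‖adjoint (phiL μ.mom n z0) c‖ := by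
  rcases eq_or_ne c 0 with rfl | hc
  · simp
  · have hcpos : 0 < ‖c‖ := norm_pos_iff.2 hc
    have h1 := kappa_lower_gen hpos hss hu c
    have h2 := crossL μ n hTL hn z0 hz c
    have h3 : ‖μ.Lip (fun _ => 1) (gL μ n z0)‖ ≤ (BL μ n + 1) * ‖z0‖ ^ n :=
      le_trans (mL_bound μ n z0 hz) (by nlinarith [pow_nonneg (le_trans zero_le_one hz) n])
    have h4 : (‖((hu.unit⁻¹ : (H →L[ℂ] H)ˣ) : H →L[ℂ] H)‖⁻¹) ^ 2 * ‖c‖ ^ 2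
        ≤ 2 * ((BL μ n + 1) * ‖z0‖ ^ n) * ‖z0‖ * ‖c‖ * ‖adjoint (phiL μ.mom n z0) c‖ := by
      calc (‖((hu.unit⁻¹ : (H →L[ℂ] H)ˣ) : H →L[ℂ] H)‖⁻¹) ^ 2 * ‖c‖ ^ 2
          ≤ (@inner ℂ H _ (kappaL μ.mom n c) c).re := h1
        _ ≤ 2 * ‖z0‖ * ‖μ.Lip (fun _ => 1) (gL μ n z0)‖ * ‖c‖
              * ‖adjoint (phiL μ.mom n z0) c‖ := h2
        _ ≤ 2 * ((BL μ n + 1) * ‖z0‖ ^ n) * ‖z0‖ * ‖c‖ * ‖adjoint (phiL μ.mom n z0) c‖ := by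
            have hz0 : (0:ℝ) ≤ ‖z0‖ := norm_nonneg _
            have := mul_le_mul_of_nonneg_left h3 (by positivity : (0:ℝ) ≤ 2 * ‖z0‖)
            nlinarith [norm_nonneg c, norm_nonneg (adjoint (phiL μ.mom n z0) c),
              mul_nonneg (norm_nonneg c) (norm_nonneg (adjoint (phiL μ.mom n z0) c))]
    have h5 : 2 * ((BL μ n + 1) * ‖z0‖ ^ n) * ‖z0‖ = 2 * (BL μ n + 1) * ‖z0‖ ^ (n + 1) := by
      rw [pow_succ]; ring
    rw [h5] at h4
    apply (mul_le_mul_iff_of_pos_right hcpos).1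
    nlinarith [h4]

end Part4c
section Part4d

variable {H : Type*} [NormedAddCommGroup H] [InnerProductSpace ℂ H] [CompleteSpace H]

lemma phiLstar_eq (μ : OpMeasure H) (n : ℕ) :
    phiLstar μ.mom n
      = fun z => (1 : H →L[ℂ] H)
          - ∑ k ∈ Finset.range n, z ^ (n - k) • adjoint (bL μ n k) := by
  funext z
  rw [phiLstar]
  congr 1
  rw [← Fin.sum_univ_eq_sum_range (fun k => z ^ (n - k) • adjoint (bL μ n k)) n]
  refine Finset.sum_congr rfl fun k _ => ?_
  have : bL μ n (k : ℕ) = phiLcoef μ.mom n k := by simp [bL, k.isLt]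
  rw [this]

lemma phiLstar_zero (μ : OpMeasure H) (n : ℕ) (hn : 0 < n) : phiLstar μ.mom n 0 = 1 := by
  have e := phiLstar_eq μ n
  rw [show phiLstar μ.mom n 0
      = (1 : H →L[ℂ] H) - ∑ k ∈ Finset.range n, (0:ℂ) ^ (n - k) • adjoint (bL μ n k) from by
    rw [e]]
  have : ∑ k ∈ Finset.range n, (0 : ℂ) ^ (n - k) • adjoint (bL μ n k) = 0 := by
    refine Finset.sum_eq_zero fun k hk => ?_
    have : n - k ≠ 0 := by
      have := Finset.mem_range.1 hk; omega
    rw [zero_pow this, zero_smul]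
  rw [this, sub_zero]

lemma phiLstar_cont (μ : OpMeasure H) (n : ℕ) : Continuous (phiLstar μ.mom n) := by
  rw [phiLstar_eq]
  apply Continuous.sub continuous_const
  apply continuous_finset_sum
  intro k _
  exact ((continuous_pow _).smul continuous_const)

lemma phiLstar_factor (μ : OpMeasure H) (n : ℕ) (z : ℂ) (hz : z ≠ 0) :
    phiLstar μ.mom n z
      = z ^ n • adjoint (phiL μ.mom n (((starRingEnd ℂ) z)⁻¹)) := by
  set w : ℂ := ((starRingEnd ℂ) z)⁻¹ with hw
  have hwz : (starRingEnd ℂ) w = z⁻¹ := by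
    rw [hw, map_inv₀, Complex.conj_conj]
  have h0 : phiL μ.mom n w
      = w ^ n • (1 : H →L[ℂ] H) - ∑ k ∈ Finset.range n, w ^ k • bL μ n k := by
    rw [phiL_eq2]
  have hstar : ∀ (a : ℂ) (T : H →L[ℂ] H), star (a • T) = ((starRingEnd ℂ) a) • star T := by
    intro a T; rw [star_smul, Complex.star_def]
  have hadj : adjoint (phiL μ.mom n w)
      = ((z⁻¹) ^ n) • (1 : H →L[ℂ] H)
        - ∑ k ∈ Finset.range n, ((z⁻¹) ^ k) • adjoint (bL μ n k) := by
    rw [← star_eq_adjoint, h0, star_sub, hstar, star_one, star_sum]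
    have hterm : ∀ k ∈ Finset.range n,
        star (w ^ k • bL μ n k) = ((z⁻¹) ^ k) • adjoint (bL μ n k) := by
      intro k _
      rw [hstar, map_pow, hwz, star_eq_adjoint]
    rw [Finset.sum_congr rfl hterm, map_pow, hwz]
  rw [hadj]
  have e := phiLstar_eq μ n
  rw [show phiLstar μ.mom n z
      = (1 : H →L[ℂ] H) - ∑ k ∈ Finset.range n, z ^ (n - k) • adjoint (bL μ n k) from by
    rw [e]]
  rw [smul_sub, smul_smul, Finset.smul_sum]
  congr 1
  · rw [← mul_pow, mul_inv_cancel₀ hz, one_pow, one_smul]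
  · refine Finset.sum_congr rfl fun k hk => ?_
    rw [smul_smul]
    congr 1
    rw [inv_pow, pow_sub₀ z hz (le_of_lt (Finset.mem_range.1 hk))]

/-- Main left-case conclusion: `Φ_n^{L,*}` is invertible on the closed unit disk. -/
lemma phiLstar_unit_on_disk (μ : OpMeasure H) (n : ℕ) (hTL : IsUnit (TmatL μ.mom n))
    (s : H →L[ℂ] H) (hpos : s.IsPositive) (hss : s * s = kappaL μ.mom n) (hu : IsUnit s)
    (hδ : 0 < (‖((hu.unit⁻¹ : (H →L[ℂ] H)ˣ) : H →L[ℂ] H)‖⁻¹) ^ 2) :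
    ∀ z : ℂ, ‖z‖ ≤ 1 → IsUnit (phiLstar μ.mom n z) := by
  rcases Nat.eq_zero_or_pos n with rfl | hn
  · intro z _
    have : phiLstar μ.mom 0 z = 1 := by rw [phiLstar]; simp
    rw [this]; exact isUnit_one
  set δ : ℝ := (‖((hu.unit⁻¹ : (H →L[ℂ] H)ˣ) : H →L[ℂ] H)‖⁻¹) ^ 2 with hδdef
  set C : ℝ := 2 * (BL μ n + 1) with hCdef
  have hC : 0 < C := by
    rw [hCdef]; nlinarith [BL_nonneg μ n]
  apply unit_on_disk (phiLstar_cont μ n)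
    (by rw [phiLstar_zero μ n hn]; exact isUnit_one) (δ / C) (by positivity) (2 * n + 1)
  intro u hu1 c
  rcases eq_or_ne u 0 with rfl | hu0
  · rw [norm_zero, zero_pow (by omega), mul_zero, zero_mul]
    exact norm_nonneg _
  · have hupos : 0 < ‖u‖ := norm_pos_iff.2 hu0
    set w : ℂ := ((starRingEnd ℂ) u)⁻¹ with hw
    have hwnorm : ‖w‖ = ‖u‖⁻¹ := by
      rw [hw, norm_inv, RCLike.norm_conj]
    have hinv : 1 ≤ ‖w‖ := by
      rw [hwnorm]
      rw [le_inv_comm₀] <;> [skip; norm_num; exact hupos]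
      simpa using hu1
    have hlow := phiL_low μ n hTL hn s hpos hss hu w hinv c
    rw [← hδdef, ← hCdef] at hlow
    have hF : ‖phiLstar μ.mom n u c‖ = ‖u‖ ^ n * ‖adjoint (phiL μ.mom n w) c‖ := by
      rw [phiLstar_factor μ n u hu0, ← hw]
      rw [ContinuousLinearMap.smul_apply, norm_smul, norm_pow]
    rw [hF]
    set X : ℝ := ‖adjoint (phiL μ.mom n w) c‖ with hX
    have hXnn : 0 ≤ X := norm_nonneg _
    rw [hwnorm] at hlow
    have hpow : ‖u‖⁻¹ ^ (n + 1) * ‖u‖ ^ (n + 1) = 1 := by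
      rw [← mul_pow, inv_mul_cancel₀ (ne_of_gt hupos), one_pow]
    have h6 : δ * ‖c‖ * ‖u‖ ^ (n + 1) ≤ C * X := by
      have := mul_le_mul_of_nonneg_right hlow (pow_nonneg (le_of_lt hupos) (n + 1))
      calc δ * ‖c‖ * ‖u‖ ^ (n + 1)
          ≤ C * ‖u‖⁻¹ ^ (n + 1) * X * ‖u‖ ^ (n + 1) := this
        _ = C * X * (‖u‖⁻¹ ^ (n + 1) * ‖u‖ ^ (n + 1)) := by ring
        _ = C * X := by rw [hpow, mul_one]
    rw [div_mul_eq_mul_div, div_mul_eq_mul_div, div_le_iff₀ hC]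
    calc δ * ‖u‖ ^ (2 * n + 1) * ‖c‖
        = (δ * ‖c‖ * ‖u‖ ^ (n + 1)) * ‖u‖ ^ n := by ring
      _ ≤ C * X * ‖u‖ ^ n := by
          apply mul_le_mul_of_nonneg_right h6 (pow_nonneg (le_of_lt hupos) n)
      _ = ‖u‖ ^ n * X * C := by ring

end Part4d

/-- On the closed unit disk, the normalized polynomials `φ_n^R(z)† ` and `φ_n^{L,*}(z)` have
no common nontrivial kernel; in particular `φ_n^{L,*}(z)` is invertible for all `|z| ≤ 1` and
`φ_n^R(z)` is invertible for `|z| = 1`.  Here `φ_n^R = Φ_n^R κ_n^{-R/2}` and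
`φ_n^{L,*} = Φ_n^{L,*} (κ_n^{-L/2})†`. -/
theorem phi_no_common_kernel_and_invertible (μ : OpMeasure H) (n : ℕ)
    (hTR : ∀ m : ℕ, IsUnit (TmatR μ.mom m)) (hTL : ∀ m : ℕ, IsUnit (TmatL μ.mom m))
    (sR sL : ℕ → H →L[ℂ] H)
    (hsR : IsSqrtSeq sR (kappaR μ.mom)) (hsL : IsSqrtSeq sL (kappaL μ.mom)) :
    (∀ z : ℂ, ‖z‖ ≤ 1 → z ≠ 0 → ∀ c : H,
        adjoint (phiR μ.mom n z * Ring.inverse (sR n)) c = 0 →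
        (phiLstar μ.mom n z * adjoint (Ring.inverse (sL n))) c = 0 → c = 0) ∧
    (∀ z : ℂ, ‖z‖ ≤ 1 →
        IsUnit (phiLstar μ.mom n z * adjoint (Ring.inverse (sL n)))) ∧
    (∀ z : ℂ, ‖z‖ = 1 → IsUnit (phiR μ.mom n z * Ring.inverse (sR n))) := by
  rcases subsingleton_or_nontrivial (H →L[ℂ] H) with hsub | hnt
  · refine ⟨?_, ?_, ?_⟩
    · intro z _ _ c _ _
      have h1 : (1 : H →L[ℂ] H) = 0 := Subsingleton.elim _ _
      calc c = (1 : H →L[ℂ] H) c := (ContinuousLinearMap.one_apply c).symm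
        _ = (0 : H →L[ℂ] H) c := by rw [h1]
        _ = 0 := by simp
    · intro z _; exact isUnit_of_subsingleton _
    · intro z _; exact isUnit_of_subsingleton _
  · have hδR : 0 < (‖(((hsR n).2.2.unit⁻¹ : (H →L[ℂ] H)ˣ) : H →L[ℂ] H)‖⁻¹) ^ 2 := by
      have h1 : (((hsR n).2.2.unit⁻¹ : (H →L[ℂ] H)ˣ) : H →L[ℂ] H) ≠ 0 := Units.ne_zero _
      have h2 : 0 < ‖(((hsR n).2.2.unit⁻¹ : (H →L[ℂ] H)ˣ) : H →L[ℂ] H)‖ := norm_pos_iff.2 h1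
      positivity
    have hδL : 0 < (‖(((hsL n).2.2.unit⁻¹ : (H →L[ℂ] H)ˣ) : H →L[ℂ] H)‖⁻¹) ^ 2 := by
      have h1 : (((hsL n).2.2.unit⁻¹ : (H →L[ℂ] H)ˣ) : H →L[ℂ] H) ≠ 0 := Units.ne_zero _
      have h2 : 0 < ‖(((hsL n).2.2.unit⁻¹ : (H →L[ℂ] H)ˣ) : H →L[ℂ] H)‖ := norm_pos_iff.2 h1
      positivity
    have hR := phiR_unit_on_circle μ n (hTR n) (sR n) (hsR n).1 (hsR n).2.1 (hsR n).2.2 hδR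
    have hL := phiLstar_unit_on_disk μ n (hTL n) (sL n) (hsL n).1 (hsL n).2.1 (hsL n).2.2 hδL
    have hsRu : IsUnit (Ring.inverse (sR n)) := isUnit_ringInverse.2 (hsR n).2.2
    have hsLu : IsUnit (adjoint (Ring.inverse (sL n))) := by
      rw [← star_eq_adjoint]
      exact (isUnit_ringInverse.2 (hsL n).2.2).star
    have goal2 : ∀ z : ℂ, ‖z‖ ≤ 1 →
        IsUnit (phiLstar μ.mom n z * adjoint (Ring.inverse (sL n))) :=
      fun z hz => (hL z hz).mul hsLu
    refine ⟨?_, goal2, fun z hz => (hR z hz).mul hsRu⟩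
    intro z hz _ c _ h2
    have hu := goal2 z hz
    have hspec : ((hu.unit : (H →L[ℂ] H)ˣ) : H →L[ℂ] H)
        = phiLstar μ.mom n z * adjoint (Ring.inverse (sL n)) := IsUnit.unit_spec hu
    have h6 : ((hu.unit : (H →L[ℂ] H)ˣ) : H →L[ℂ] H) c = 0 := by rw [hspec]; exact h2
    have h7 := congrFun (congrArg DFunLike.coe hu.unit.inv_mul) c
    simp only [ContinuousLinearMap.mul_apply, ContinuousLinearMap.one_apply] at h7
    rw [h6] at h7
    rw [← h7]
    simp
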